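/- arXiv:1510.07330 — 10 statements merged into one kernel-verified Lean document; each statement's English description precedes it below -/
import Mathlib

section
/- Let q be a prime and let f(x), g(x) be polynomials with integer coefficients, each of which has at least one coefficient not divisible by q (i.e., each is not identically zero in ℤ/qℤ). If the system of congruences f(x) ≡ 0 (mod q) and g(x) ≡ 0 (mod q) has exactly ℓ solutions x in ℤ/qℤ, then the resultant R(f, g) is divisible by q^ℓ. -/
/-!
A common root `a` of `f` and `g` modulo `q` gives the kernel vector `(a ^ (N - 1), …, a, 1)` of
the Sylvester matrix modulo `q`, since its rows are the coefficient vectors of the polynomials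
`X ^ k * f` and `X ^ k * g`; distinct roots give linearly independent vectors by Vandermonde,
and there are at most `deg f ≤ N` of them since `f` is nonzero modulo `q`.

An integer matrix `M` whose reduction modulo `q` kills `ℓ` independent vectors has
`q ^ ℓ ∣ det M`: lift one kernel vector to `w`, so that `M w = q u`, and replace a column `j`
with `w j ≢ 0` by `u`; then `w j * det M = q * det M'`, and `M'` modulo `q` still kills the
other kernel vectors once their `j`-th coordinates are cleared with the first one.
-/

open Polynomial

/-- The Sylvester matrix of two integer polynomials `f` (of degree `n = f.natDegree`)
and `g` (of degree `m = g.natDegree`): an `(m + n) × (m + n)` matrix whose first `m`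
rows are shifted copies of the coefficients of `f` (in decreasing order of degree)
and whose last `n` rows are shifted copies of the coefficients of `g`. -/
def sylvesterMatrix (f g : Polynomial ℤ) :
    Matrix (Fin (g.natDegree + f.natDegree)) (Fin (g.natDegree + f.natDegree)) ℤ :=
  Matrix.of fun i j =>
    if (i : ℕ) < g.natDegree then
      if (i : ℕ) ≤ (j : ℕ) ∧ (j : ℕ) ≤ (i : ℕ) + f.natDegree then
        f.coeff (f.natDegree - ((j : ℕ) - (i : ℕ)))
      else 0
    else
      if (i : ℕ) - g.natDegree ≤ (j : ℕ) ∧ (j : ℕ) ≤ ((i : ℕ) - g.natDegree) + g.natDegree then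
        g.coeff (g.natDegree - ((j : ℕ) - ((i : ℕ) - g.natDegree)))
      else 0

/-- The resultant `R(f, g)` of two integer polynomials, i.e. the determinant of their
Sylvester matrix. -/
def resultant (f g : Polynomial ℤ) : ℤ :=
  (sylvesterMatrix f g).det

open Matrix

namespace Matrix

variable {n R : Type*} [Fintype n] [DecidableEq n]

theorem mulVec_updateCol_of_eq_zero [NonUnitalNonAssocSemiring R] (A : Matrix n n R) {j : n}
    (c : n → R) {v : n → R} (hv : v j = 0) : A.updateCol j c *ᵥ v = A *ᵥ v := by
  ext i
  refine Finset.sum_congr rfl fun k _ => ?_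
  by_cases hk : k = j
  · simp [hk, hv]
  · simp [hk]

theorem mul_det_eq_mul_det_updateCol [CommRing R] {A : Matrix n n R} {w u : n → R} {c : R}
    (h : A *ᵥ w = c • u) (j : n) : w j * A.det = c * (A.updateCol j u).det := by
  have hcol : (fun k => ∑ i, w i • A k i) = c • u := by
    rw [← h]; ext k; simp [mulVec, dotProduct, mul_comm]
  rw [← smul_eq_mul, ← det_updateCol_sum, hcol, det_updateCol_smul]

end Matrix

section Kernel

variable {q : ℕ} {n : Type*} [Fintype n] [DecidableEq n]

theorem exists_mul_det_eq_mul_det_updateCol (M : Matrix n n ℤ) {v : n → ZMod q}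
    (hv : M.map (Int.cast : ℤ → ZMod q) *ᵥ v = 0) (j : n) :
    ∃ (w : ℤ) (u : n → ℤ), (w : ZMod q) = v j ∧ w * M.det = q * (M.updateCol j u).det := by
  choose w hw using fun i => ZMod.intCast_surjective (v i)
  have hdvd : ∀ i, (q : ℤ) ∣ (M *ᵥ w) i := fun i => by
    rw [← ZMod.intCast_zmod_eq_zero_iff_dvd, ← eq_intCast (Int.castRingHom (ZMod q)),
      RingHom.map_mulVec]
    simp [Function.comp_def, hw, hv]
  choose u hu using hdvd
  exact ⟨w j, u, hw j, mul_det_eq_mul_det_updateCol (funext hu) j⟩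

variable [Fact q.Prime]

theorem pow_dvd_det_of_linearIndependent {ℓ : ℕ} (M : Matrix n n ℤ) (v : Fin ℓ → n → ZMod q)
    (hv : LinearIndependent (ZMod q) v) (hker : ∀ k, M.map (Int.cast : ℤ → ZMod q) *ᵥ v k = 0) :
    (q : ℤ) ^ ℓ ∣ M.det := by
  induction ℓ generalizing M with
  | zero => simp
  | succ ℓ ih =>
    obtain ⟨j, hj⟩ : ∃ j, v 0 j ≠ 0 := Function.ne_iff.mp (hv.ne_zero 0)
    obtain ⟨w, u, hwj, hdet⟩ := exists_mul_det_eq_mul_det_updateCol M (hker 0) j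
    let c : Fin ℓ → ZMod q := fun k => -(v k.succ j / v 0 j)
    have hv' : LinearIndependent (ZMod q) fun k => v k.succ + c k • v 0 :=
      ((linearIndependent_add_smul_iff (c := Fin.cons 0 c) rfl).2 hv).comp _ (Fin.succ_injective _)
    have hker' : ∀ k,
        (M.updateCol j u).map (Int.cast : ℤ → ZMod q) *ᵥ (v k.succ + c k • v 0) = 0 := by
      intro k
      rw [map_updateCol, mulVec_updateCol_of_eq_zero _ _ (by simp [c, hj]), mulVec_add,
        mulVec_smul, hker, hker, smul_zero, add_zero]
    have hw : ¬ (q : ℤ) ∣ w := by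
      rwa [← ZMod.intCast_zmod_eq_zero_iff_dvd, hwj]
    have hq : Prime (q : ℤ) := Nat.prime_iff_prime_int.mp Fact.out
    refine hq.pow_dvd_of_dvd_mul_left _ hw ?_
    rw [hdet, pow_succ']
    exact mul_dvd_mul_left _ (ih _ _ hv' hker')

end Kernel

section Sylvester

variable {R S : Type*} [CommRing R] [CommRing S]

theorem Polynomial.coeff_X_pow_mul_rev {p : R[X]} {k i d N : ℕ} (hp : p.natDegree ≤ d)
    (hN : k + i + d + 1 = N) (j : Fin N) :
    (X ^ k * p).coeff (j.rev : ℕ) =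
      if i ≤ (j : ℕ) ∧ (j : ℕ) ≤ i + d then p.coeff (d - ((j : ℕ) - i)) else 0 := by
  rw [coeff_X_pow_mul', Fin.val_rev]
  split_ifs with hk hij hij
  · congr 1; omega
  · exact coeff_eq_zero_of_natDegree_lt (by omega)
  · omega
  · rfl

theorem Polynomial.eval₂_eq_sum_fin_rev (φ : S →+* R) {p : S[X]} {N : ℕ} (hp : p.natDegree < N)
    (a : R) : p.eval₂ φ a = ∑ j : Fin N, φ (p.coeff j.rev) * a ^ (j.rev : ℕ) := by
  rw [eval₂_eq_sum_range' φ hp, ← Fin.sum_univ_eq_sum_range, ← Equiv.sum_comp Fin.revPerm]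
  rfl

noncomputable def sylvesterRowPoly (f g : ℤ[X]) (i : ℕ) : ℤ[X] :=
  if i < g.natDegree then X ^ (g.natDegree - 1 - i) * f
  else X ^ (f.natDegree - 1 - (i - g.natDegree)) * g

theorem sylvesterMatrix_apply_eq_coeff (f g : ℤ[X]) (i j : Fin (g.natDegree + f.natDegree)) :
    sylvesterMatrix f g i j = (sylvesterRowPoly f g i).coeff (j.rev : ℕ) := by
  have hi := i.isLt
  simp only [sylvesterMatrix, sylvesterRowPoly, Matrix.of_apply]
  by_cases him : (i : ℕ) < g.natDegree
  · rw [if_pos him, if_pos him, coeff_X_pow_mul_rev (i := i) le_rfl (by omega)]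
  · rw [if_neg him, if_neg him, coeff_X_pow_mul_rev (i := i - g.natDegree) le_rfl (by omega)]

theorem natDegree_sylvesterRowPoly_lt (f g : ℤ[X]) {i : ℕ} (hi : i < g.natDegree + f.natDegree) :
    (sylvesterRowPoly f g i).natDegree < g.natDegree + f.natDegree := by
  unfold sylvesterRowPoly
  split_ifs <;> refine natDegree_mul_le.trans_lt ?_ <;> rw [natDegree_X_pow] <;> omega

theorem sylvesterMatrix_map_mulVec_pow_rev (f g : ℤ[X]) (a : R) :
    (sylvesterMatrix f g).map (Int.cast : ℤ → R) *ᵥ (fun j => a ^ (j.rev : ℕ)) =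
      fun i : Fin _ => (sylvesterRowPoly f g i).eval₂ (Int.castRingHom R) a := by
  ext i
  rw [eval₂_eq_sum_fin_rev _ (natDegree_sylvesterRowPoly_lt f g i.isLt)]
  simp [Matrix.mulVec, dotProduct, sylvesterMatrix_apply_eq_coeff]

theorem eval₂_sylvesterRowPoly_eq_zero {f g : ℤ[X]} {φ : ℤ →+* R} {a : R}
    (hf : f.eval₂ φ a = 0) (hg : g.eval₂ φ a = 0) (i : ℕ) :
    (sylvesterRowPoly f g i).eval₂ φ a = 0 := by
  unfold sylvesterRowPoly
  split_ifs <;> simp [hf, hg]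

end Sylvester

theorem linearIndependent_pow_rev {K : Type*} [Field K] {ℓ N : ℕ} (hℓN : ℓ ≤ N) {e : Fin ℓ → K}
    (he : Function.Injective e) :
    LinearIndependent K fun k (j : Fin N) => e k ^ (j.rev : ℕ) := by
  rw [Fintype.linearIndependent_iff]
  intro d hd
  refine congrFun (Matrix.eq_zero_of_forall_pow_sum_mul_pow_eq_zero he fun i => ?_)
  have hi := i.isLt
  simpa [show N - (N - (i + 1) + 1) = i by omega] using congrFun hd (Fin.rev (Fin.castLE hℓN i))

theorem resultant_dvd_of_common_roots_general (q : ℕ) [Fact q.Prime] (f g : Polynomial ℤ)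
    (hf : f.map (Int.castRingHom (ZMod q)) ≠ 0)
    (ℓ : ℕ)
    (hℓ : (Finset.univ.filter fun x : ZMod q =>
        (f.map (Int.castRingHom (ZMod q))).eval x = 0 ∧
        (g.map (Int.castRingHom (ZMod q))).eval x = 0).card = ℓ) :
    (q : ℤ) ^ ℓ ∣ _root_.resultant f g := by
  set roots := Finset.univ.filter fun x : ZMod q =>
    (f.map (Int.castRingHom (ZMod q))).eval x = 0 ∧ (g.map (Int.castRingHom (ZMod q))).eval x = 0
  subst hℓ
  have hcard : roots.card ≤ g.natDegree + f.natDegree := by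
    have hroots : roots.val ⊆ (f.map (Int.castRingHom (ZMod q))).roots := fun x hx =>
      (mem_roots hf).2 (Finset.mem_filter.1 hx).2.1
    exact (card_le_degree_of_subset_roots hroots).trans
      (natDegree_map_le.trans (Nat.le_add_left _ _))
  let e : Fin roots.card → ZMod q := fun k => roots.equivFin.symm k
  have he : Function.Injective e := Subtype.val_injective.comp roots.equivFin.symm.injective
  refine pow_dvd_det_of_linearIndependent _ _ (linearIndependent_pow_rev hcard he) fun k => ?_
  obtain ⟨hfk, hgk⟩ := (Finset.mem_filter.1 (roots.equivFin.symm k).2).2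
  rw [sylvesterMatrix_map_mulVec_pow_rev]
  ext i
  exact eval₂_sylvesterRowPoly_eq_zero (by rwa [← eval_map]) (by rwa [← eval_map]) i

/-- **Theorem 1.** Let `q` be a prime and `f, g` integer polynomials, each not
identically zero in `ℤ/qℤ`. If the system `f(x) ≡ g(x) ≡ 0 (mod q)` has exactly `ℓ`
solutions in `ℤ/qℤ`, then `q^ℓ ∣ R(f, g)`. -/
theorem resultant_dvd_of_common_roots (q : ℕ) [Fact q.Prime] (f g : Polynomial ℤ)
    (hf : f.map (Int.castRingHom (ZMod q)) ≠ 0)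
    (hg : g.map (Int.castRingHom (ZMod q)) ≠ 0)
    (ℓ : ℕ)
    (hℓ : (Finset.univ.filter fun x : ZMod q =>
        (f.map (Int.castRingHom (ZMod q))).eval x = 0 ∧
        (g.map (Int.castRingHom (ZMod q))).eval x = 0).card = ℓ) :
    (q : ℤ) ^ ℓ ∣ _root_.resultant f g :=
  resultant_dvd_of_common_roots_general q f g hf ℓ hℓ
end

section
/- Let q be a prime and let f(x), g(x) be polynomials with integer coefficients of degrees n and m respectively, with f monic, and each of f, g not identically zero in ℤ/qℤ. For 0 ≤ k ≤ n−1 let r_k(x) = r_{k,n−1}x^{n−1} + ⋯ + r_{k,0} be the remainder of x^k g(x) upon division by f(x), and let A be the n×n integer matrix whose row indexed by k (for k = n−1, n−2, …, 0) is (r_{k,n−1}, r_{k,n−2}, …, r_{k,0}). If the reduction of A modulo q has rank p over the field ℤ/qℤ, then R(f, g) ≡ 0 (mod q^{n−p}); moreover, if the system f(x) ≡ g(x) ≡ 0 (mod q) has exactly ℓ solutions in ℤ/qℤ, then n − p ≥ ℓ. -/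
open Polynomial

/-!
Work modulo `q`. A vector `u` lies in the left kernel of `A` exactly when `f ∣ b * g` for
`b = ∑ u_k x^(n-1-k)`, a polynomial of degree `< n`. Writing `b * g = f * c` forces `deg c < m`,
and the coefficients of `(-c, b)` form a left kernel vector of the Sylvester matrix that
restricts to `u`. Hence the Sylvester matrix has a left kernel of dimension at least `n - p`
modulo `q`. An integer matrix `M` whose reduction has a `t`-dimensional left kernel satisfies
`q ^ t ∣ det M`: extend a basis of the kernel to a basis, lift it to an integer matrix `B`, so
that `det B` is a unit modulo `q` while `t` rows of `B * M` are divisible by `q`.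

For each common root `x`, the vector `(x^(n-1), …, x, 1)` lies in the right kernel of `A`,
because `A` maps it to the values `r_k(x) = x^k g(x) - f(x) (…) = 0`. Distinct points give at most
`n` such vectors, and these are linearly independent (test against Lagrange basis polynomials),
so `ℓ ≤ n - p`.
-/

open Matrix Module LinearMap

lemma Fin.sum_univ_sub_one_sub {M : Type*} [AddCommMonoid M] (N : ℕ) (f : ℕ → M) :
    ∑ j : Fin N, f (N - 1 - j) = ∑ j : Fin N, f j := by
  rw [Fin.sum_univ_eq_sum_range (fun j => f (N - 1 - j)), Fin.sum_univ_eq_sum_range f,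
    Finset.sum_range_reflect f N]

lemma Matrix.pow_card_dvd_det_of_forall_dvd {R ι : Type*} [CommRing R] [Fintype ι]
    [DecidableEq ι] (M : Matrix ι ι R) (a : R) (s : Finset ι)
    (h : ∀ i ∈ s, ∀ j, a ∣ M i j) : a ^ s.card ∣ M.det := by
  rw [← det_transpose, det_apply']
  refine Finset.dvd_sum fun σ _ => Dvd.dvd.mul_left ?_ _
  rw [← Finset.prod_mul_prod_compl s, ← Finset.prod_const]
  exact (Finset.prod_dvd_prod_of_dvd _ _ fun i hi => h i hi _).mul_right _

lemma Module.Basis.sumExtend_inl {K V ι : Type*} [DivisionRing K] [AddCommGroup V]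
    [Module K V] {v : ι → V} (hv : LinearIndependent K v) (i : ι) :
    Basis.sumExtend hv (Sum.inl i) = v i := by
  simp only [Basis.sumExtend, Equiv.Set.sumDiffSubset, Equiv.trans_def, Basis.coe_reindex,
    Basis.coe_extend, Function.comp_apply]
  rfl

lemma Module.Basis.exists_finset_card_eq_finrank {K V ι : Type*} [DivisionRing K] [AddCommGroup V]
    [Module K V] [Fintype ι] (b₀ : Basis ι K V) (W : Submodule K V) :
    ∃ (b : Basis ι K V) (s : Finset ι), s.card = finrank K W ∧ ∀ i ∈ s, b i ∈ W := by
  have := Module.Finite.of_basis b₀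
  have hv : LinearIndependent K fun k => (finBasis K W k : V) :=
    (finBasis K W).linearIndependent.map' W.subtype (Submodule.ker_subtype W)
  let e := (Basis.sumExtend hv).indexEquiv b₀
  refine ⟨(Basis.sumExtend hv).reindex e,
    Finset.univ.map (Function.Embedding.inl.trans e.toEmbedding), by simp, ?_⟩
  simp only [Finset.mem_map, Finset.mem_univ, true_and, Function.Embedding.trans_apply,
    Equiv.coe_toEmbedding, forall_exists_index]
  rintro _ k rfl
  rw [Basis.reindex_apply, e.symm_apply_apply, Function.Embedding.inl_apply,
    Basis.sumExtend_inl]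
  exact (finBasis K W k).2

lemma pow_finrank_ker_vecMulLinear_dvd_det {ι : Type*} [Fintype ι] [DecidableEq ι] (q : ℕ)
    [Fact q.Prime] (M : Matrix ι ι ℤ) :
    (q : ℤ) ^ finrank (ZMod q) (ker (M.map (Int.cast : ℤ → ZMod q)).vecMulLinear) ∣
      M.det := by
  set M' := M.map (Int.cast : ℤ → ZMod q)
  obtain ⟨b, s, hs, hbs⟩ :=
    (Pi.basisFun (ZMod q) ι).exists_finset_card_eq_finrank (ker M'.vecMulLinear)
  set B' : Matrix ι ι (ZMod q) := Matrix.of fun i => b i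
  have hB' : IsUnit B'.det := by
    rw [← det_transpose]
    exact (Pi.basisFun (ZMod q) ι).isUnit_det b
  set B : Matrix ι ι ℤ := B'.map (Function.surjInv ZMod.intCast_surjective)
  have hBB' : B.map Int.cast = B' := by
    ext i j
    exact Function.surjInv_eq ZMod.intCast_surjective _
  have hB : ¬ (q : ℤ) ∣ B.det := by
    rw [← ZMod.intCast_zmod_eq_zero_iff_dvd, Int.cast_det, hBB']
    exact hB'.ne_zero
  have hmap : (B * M).map (Int.cast : ℤ → ZMod q) = B' * M' := by
    rw [← hBB']
    exact Matrix.map_mul (f := Int.castRingHom (ZMod q))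
  have hBM : (q : ℤ) ^ s.card ∣ (B * M).det := by
    refine pow_card_dvd_det_of_forall_dvd _ _ s fun i hi j => ?_
    rw [← ZMod.intCast_zmod_eq_zero_iff_dvd, ← Matrix.map_apply (f := Int.cast), hmap,
      mul_apply_eq_vecMul]
    exact congrFun (mem_ker.mp (hbs i hi)) j
  rw [det_mul, hs] at hBM
  exact (Nat.prime_iff_prime_int.mp Fact.out).pow_dvd_of_dvd_mul_left _ hB hBM

namespace Polynomial

variable {R : Type*} [CommRing R]

noncomputable def descCoeffs (N : ℕ) : R[X] →ₗ[R] Fin N → R :=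
  LinearMap.pi fun j => lcoeff R (N - 1 - j)

@[simp]
lemma descCoeffs_apply (N : ℕ) (p : R[X]) (j : Fin N) :
    descCoeffs N p j = p.coeff (N - 1 - j) := rfl

lemma eq_zero_of_descCoeffs_eq_zero {N : ℕ} {p : R[X]} (hp : p.degree < N)
    (h : descCoeffs N p = 0) : p = 0 := by
  ext k
  rcases lt_or_ge k N with hk | hk
  · simpa [Nat.sub_sub_self (Nat.le_sub_one_of_lt hk)] using congrFun h ⟨N - 1 - k, by omega⟩
  · exact coeff_eq_zero_of_degree_lt (hp.trans_le (by exact_mod_cast hk))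

lemma sum_descCoeffs_smul_X_pow {N : ℕ} {p : R[X]} (hp : p.degree < N) :
    ∑ j : Fin N, descCoeffs N p j • X ^ (N - 1 - (j : ℕ)) = p := by
  simp only [descCoeffs_apply]
  rw [Fin.sum_univ_sub_one_sub N fun k => p.coeff k • X ^ k,
    sum_fin (fun k a => a • X ^ k) (by simp) hp]
  simp only [smul_X_eq_monomial, sum_monomial_eq]

lemma descCoeffs_dotProduct_pow {N : ℕ} {p : R[X]} (hp : p.degree < N) (x : R) :
    descCoeffs N p ⬝ᵥ (fun j : Fin N => x ^ (N - 1 - (j : ℕ))) = p.eval x := by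
  simp only [dotProduct, descCoeffs_apply]
  rw [Fin.sum_univ_sub_one_sub N fun k => p.coeff k * x ^ k,
    sum_fin (fun k a => a * x ^ k) (by simp) hp, eval_eq_sum]

lemma vecMul_of_descCoeffs {ι : Type*} [Fintype ι] (N : ℕ) (p : ι → R[X]) (w : ι → R) :
    w ᵥ* Matrix.of (fun i => descCoeffs N (p i)) = descCoeffs N (∑ i, w i • p i) := by
  simp only [vecMul_eq_sum, map_sum, map_smul]
  rfl

lemma of_descCoeffs_mulVec_pow {ι : Type*} {N : ℕ} (p : ι → R[X])
    (hp : ∀ i, (p i).degree < N) (x : R) :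
    Matrix.of (fun i => descCoeffs N (p i)) *ᵥ (fun j : Fin N => x ^ (N - 1 - (j : ℕ))) =
      fun i => (p i).eval x := by
  ext i
  exact descCoeffs_dotProduct_pow (hp i) x

noncomputable def remainderMatrix (F G : R[X]) (n : ℕ) : Matrix (Fin n) (Fin n) R :=
  Matrix.of fun k => descCoeffs n ((X ^ (n - 1 - (k : ℕ)) * G) %ₘ F)

noncomputable def sylvesterRows (F G : R[X]) (m n : ℕ) : Fin (m + n) → R[X] :=
  Fin.append (fun i : Fin m => X ^ (m - 1 - (i : ℕ)) * F)
    fun k : Fin n => X ^ (n - 1 - (k : ℕ)) * G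

lemma map_sylvesterRows {S : Type*} [CommRing S] (φ : R →+* S) (F G : R[X]) (m n : ℕ)
    (i : Fin (m + n)) :
    (sylvesterRows F G m n i).map φ = sylvesterRows (F.map φ) (G.map φ) m n i := by
  induction i using Fin.addCases <;> simp [sylvesterRows]

lemma sum_smul_sylvesterRows (F G : R[X]) {m n : ℕ} (a : Fin m → R) (u : Fin n → R) :
    ∑ i, Fin.append a u i • sylvesterRows F G m n i =
      (∑ i, a i • X ^ (m - 1 - (i : ℕ))) * F +
        (∑ k, u k • X ^ (n - 1 - (k : ℕ))) * G := by
  simp only [Fin.sum_univ_add, sylvesterRows, Fin.append_left, Fin.append_right, Finset.sum_mul,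
    smul_mul_assoc]

lemma degree_modByMonic_lt_of_natDegree_eq {F : R[X]} {n : ℕ} (hF : F.Monic)
    (hFn : F.natDegree = n) (p : R[X]) : (p %ₘ F).degree < n := by
  nontriviality R
  exact (degree_modByMonic_lt p hF).trans_eq (by rw [degree_eq_natDegree hF.ne_zero, hFn])

lemma exists_degree_lt_mul_add_mul_eq_zero {F G b : R[X]} {m : ℕ} (hF : F.Monic)
    (hG : G.natDegree ≤ m) (hb : b.degree < F.natDegree) (hdvd : F ∣ b * G) :
    ∃ a : R[X], a.degree < m ∧ a * F + b * G = 0 := by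
  obtain ⟨c, hc⟩ := hdvd
  refine ⟨-c, ?_, by rw [hc]; ring⟩
  rw [degree_neg]
  rcases eq_or_ne c 0 with rfl | hc0
  · exact WithBot.bot_lt_coe m
  have hb0 : b ≠ 0 := by
    rintro rfl
    exact hc0 (hF.mul_right_eq_zero_iff.mp (by rw [← hc, zero_mul]))
  have hbn : b.natDegree < F.natDegree := (natDegree_lt_iff_degree_lt hb0).mpr hb
  have hcn : F.natDegree + c.natDegree ≤ b.natDegree + G.natDegree := by
    rw [← hF.natDegree_mul' hc0, ← hc]
    exact natDegree_mul_le
  exact (natDegree_lt_iff_degree_lt hc0).mp (by omega)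

end Polynomial

section Field

variable {K : Type*} [Field K]

lemma Matrix.finrank_ker_mulVecLin {m n : Type*} [Fintype m] [Fintype n] (M : Matrix m n K) :
    finrank K (ker M.mulVecLin) = Fintype.card n - M.rank := by
  have := finrank_range_add_finrank_ker M.mulVecLin
  rw [Module.finrank_fintype_fun_eq_card] at this
  rw [Matrix.rank]
  omega

lemma Matrix.finrank_ker_vecMulLinear {m n : Type*} [Fintype m] [Fintype n] (M : Matrix m n K) :
    finrank K (ker M.vecMulLinear) = Fintype.card m - M.rank := by
  rw [← mulVecLin_transpose, Matrix.finrank_ker_mulVecLin, rank_transpose]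

lemma linearIndependent_pow_sub_one_sub [DecidableEq K] {N : ℕ} (s : Finset K)
    (hs : s.card ≤ N) :
    LinearIndependent K fun x : s => fun j : Fin N => (x : K) ^ (N - 1 - (j : ℕ)) := by
  rw [Fintype.linearIndependent_iff]
  intro c hc y
  have hy : (y : K) ∈ s := y.2
  set h := Lagrange.basis s _root_.id (y : K)
  have hdeg : h.degree < N := by
    have := Finset.card_pos.mpr ⟨_, hy⟩
    rw [Lagrange.degree_basis (Set.injOn_id _) hy]
    exact_mod_cast (by omega : s.card - 1 < N)
  have hsum : ∑ x : s, c x * h.eval (x : K) = c y := by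
    rw [Finset.sum_eq_single y (fun x _ hxy => ?_) fun hy' => (hy' (Finset.mem_univ y)).elim]
    · rw [show h.eval (y : K) = 1 from Lagrange.eval_basis_self (Set.injOn_id _) hy, mul_one]
    · rw [show h.eval (x : K) = 0 from
        Lagrange.eval_basis_of_ne (v := _root_.id) (Subtype.coe_ne_coe.mpr hxy.symm) x.2, mul_zero]
  calc c y = ∑ x : s, c x * h.eval (x : K) := hsum.symm
    _ = descCoeffs N h ⬝ᵥ
          ∑ x : s, c x • (fun j : Fin N => (x : K) ^ (N - 1 - (j : ℕ)) : Fin N → K) := by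
        simp only [dotProduct_sum, dotProduct_smul, descCoeffs_dotProduct_pow hdeg, smul_eq_mul]
    _ = 0 := by rw [hc, dotProduct_zero]

lemma finrank_ker_vecMulLinear_remainderMatrix_le {F G : K[X]} {m n : ℕ} (hF : F.Monic)
    (hFn : F.natDegree = n) (hG : G.natDegree ≤ m) :
    finrank K (ker (remainderMatrix F G n).vecMulLinear) ≤
      finrank K
        (ker (Matrix.of fun i => descCoeffs (m + n) (sylvesterRows F G m n i)).vecMulLinear) := by
  let π : (Fin (m + n) → K) →ₗ[K] Fin n → K := funLeft K K (Fin.natAdd m)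
  refine (Submodule.finrank_mono (t := (ker _).map π) ?_).trans (Submodule.finrank_map_le _ _)
  intro u hu
  rw [mem_ker, vecMulLinear_apply, remainderMatrix, vecMul_of_descCoeffs] at hu
  have hrem : ∑ k, u k • ((X ^ (n - 1 - (k : ℕ)) * G) %ₘ F) = 0 :=
    eq_zero_of_descCoeffs_eq_zero (mem_degreeLT.mp (Submodule.sum_mem _ fun k _ =>
      Submodule.smul_mem _ _ (mem_degreeLT.mpr (degree_modByMonic_lt_of_natDegree_eq hF hFn _)))) hu
  set b := ∑ k : Fin n, u k • (X ^ (n - 1 - (k : ℕ)) : K[X])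
  have hb : b.degree < F.natDegree := by
    rw [hFn]
    refine mem_degreeLT.mp (Submodule.sum_mem _ fun k _ => Submodule.smul_mem _ _ ?_)
    rw [mem_degreeLT, degree_X_pow]
    exact_mod_cast (by omega : n - 1 - (k : ℕ) < n)
  have hdvd : F ∣ b * G := by
    rw [← modByMonic_eq_zero_iff_dvd hF, ← hrem, ← modByMonicHom_apply, Finset.sum_mul,
      map_sum]
    simp only [smul_mul_assoc, map_smul, modByMonicHom_apply]
  obtain ⟨a, ha, hab⟩ := exists_degree_lt_mul_add_mul_eq_zero hF hG hb hdvd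
  refine ⟨Fin.append (descCoeffs m a) u, ?_, ?_⟩
  · rw [SetLike.mem_coe, mem_ker, vecMulLinear_apply, vecMul_of_descCoeffs,
      sum_smul_sylvesterRows, sum_descCoeffs_smul_X_pow ha, hab, map_zero]
  · ext k
    simp [π]

lemma card_common_roots_le_finrank_ker_remainderMatrix [Fintype K] [DecidableEq K] {F G : K[X]}
    {n : ℕ} (hF : F.Monic) (hFn : F.natDegree = n) :
    (Finset.univ.filter fun x => F.eval x = 0 ∧ G.eval x = 0).card ≤
      finrank K (ker (remainderMatrix F G n).mulVecLin) := by
  set Z := Finset.univ.filter fun x => F.eval x = 0 ∧ G.eval x = 0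
  have hZ : Z.card ≤ n := hFn ▸ card_le_degree_of_subset_roots fun x hx =>
    (mem_roots hF.ne_zero).mpr (Finset.mem_filter.mp hx).2.1
  have hind := linearIndependent_pow_sub_one_sub Z hZ
  rw [← Fintype.card_coe Z, ← finrank_span_eq_card hind]
  refine Submodule.finrank_mono (Submodule.span_le.mpr ?_)
  rintro _ ⟨x, rfl⟩
  obtain ⟨hFx, hGx⟩ := (Finset.mem_filter.mp x.2).2
  rw [SetLike.mem_coe, mem_ker, mulVecLin_apply, remainderMatrix,
    of_descCoeffs_mulVec_pow _ fun k => degree_modByMonic_lt_of_natDegree_eq hF hFn _]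
  ext k
  simp [modByMonic_eq_sub_mul_div, hFx, hGx]

end Field

lemma sylvesterMatrix_eq_of_descCoeffs (f g : ℤ[X]) :
    sylvesterMatrix f g =
      Matrix.of fun i => descCoeffs _ (sylvesterRows f g g.natDegree f.natDegree i) := by
  ext i j
  have hj := j.isLt
  induction i using Fin.addCases with
  | left i =>
    have hi := i.isLt
    simp only [sylvesterMatrix, sylvesterRows, Matrix.of_apply, Fin.val_castAdd, Fin.append_left,
      descCoeffs_apply, coeff_X_pow_mul', if_pos hi]
    split_ifs
    · congr 1; omega
    · omega
    · exact (coeff_eq_zero_of_natDegree_lt (by omega)).symm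
    · rfl
  | right k =>
    have hk := k.isLt
    simp only [sylvesterMatrix, sylvesterRows, Matrix.of_apply, Fin.val_natAdd, Fin.append_right,
      descCoeffs_apply, coeff_X_pow_mul', if_neg (Nat.not_lt.mpr (Nat.le_add_right _ _))]
    split_ifs
    · congr 1; omega
    · omega
    · exact (coeff_eq_zero_of_natDegree_lt (by omega)).symm
    · rfl

theorem resultant_dvd_of_rank_general (q : ℕ) [Fact q.Prime] (f g : Polynomial ℤ) (n : ℕ)
    (hn : f.natDegree = n) (hmonic : f.Monic)
    (A : Matrix (Fin n) (Fin n) ℤ)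
    (hA : ∀ i j : Fin n,
      A i j = ((X ^ (n - 1 - (i : ℕ)) * g) %ₘ f).coeff (n - 1 - (j : ℕ)))
    (p : ℕ) (hp : (A.map (Int.cast : ℤ → ZMod q)).rank = p)
    (ℓ : ℕ)
    (hℓ : (Finset.univ.filter fun x : ZMod q =>
        (f.map (Int.castRingHom (ZMod q))).eval x = 0 ∧
        (g.map (Int.castRingHom (ZMod q))).eval x = 0).card = ℓ) :
    (q : ℤ) ^ (n - p) ∣ _root_.resultant f g ∧ n - p ≥ ℓ := by
  subst hn
  set φ := Int.castRingHom (ZMod q)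
  have hF : (f.map φ).Monic := hmonic.map φ
  have hFn : (f.map φ).natDegree = f.natDegree := hmonic.natDegree_map φ
  have hA' : A.map Int.cast = remainderMatrix (f.map φ) (g.map φ) f.natDegree := by
    ext i j
    rw [Matrix.map_apply, hA, ← eq_intCast φ, ← coeff_map, map_modByMonic _ hmonic]
    simp [remainderMatrix]
  have hS' : (sylvesterMatrix f g).map Int.cast =
      Matrix.of fun i => descCoeffs _ (sylvesterRows (f.map φ) (g.map φ) _ _ i) := by
    ext i j
    simp [sylvesterMatrix_eq_of_descCoeffs, φ, ← map_sylvesterRows]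
  constructor
  · have hker : finrank (ZMod q) (ker (A.map (Int.cast : ℤ → ZMod q)).vecMulLinear) =
        f.natDegree - p := by
      rw [finrank_ker_vecMulLinear, Fintype.card_fin, hp]
    refine (pow_dvd_pow _ ?_).trans (pow_finrank_ker_vecMulLinear_dvd_det q (sylvesterMatrix f g))
    rw [← hker, hA', hS']
    exact finrank_ker_vecMulLinear_remainderMatrix_le hF hFn natDegree_map_le
  · have hker : finrank (ZMod q) (ker (A.map (Int.cast : ℤ → ZMod q)).mulVecLin) =
        f.natDegree - p := by
      rw [finrank_ker_mulVecLin, Fintype.card_fin, hp]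
    rw [ge_iff_le, ← hℓ, ← hker, hA']
    exact card_common_roots_le_finrank_ker_remainderMatrix hF hFn

/-- **Corollary 1, first part.** With `A` the `n × n` matrix of remainders
`r_k = x^k g mod f` (rows indexed by `k = n-1, …, 0`, columns recording the
coefficients of `x^{n-1}, …, x^0`), if the reduction of `A` mod `q` has rank `p`,
then `q^{n-p} ∣ R(f, g)`; and if the system `f ≡ g ≡ 0 (mod q)` has exactly `ℓ`
solutions, then `n - p ≥ ℓ`. -/
theorem resultant_dvd_of_rank (q : ℕ) [Fact q.Prime] (f g : Polynomial ℤ) (n m : ℕ)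
    (hn : f.natDegree = n) (hm : g.natDegree = m) (hmonic : f.Monic)
    (hf : f.map (Int.castRingHom (ZMod q)) ≠ 0)
    (hg : g.map (Int.castRingHom (ZMod q)) ≠ 0)
    (A : Matrix (Fin n) (Fin n) ℤ)
    (hA : ∀ i j : Fin n,
      A i j = ((X ^ (n - 1 - (i : ℕ)) * g) %ₘ f).coeff (n - 1 - (j : ℕ)))
    (p : ℕ) (hp : (A.map (Int.cast : ℤ → ZMod q)).rank = p)
    (ℓ : ℕ)
    (hℓ : (Finset.univ.filter fun x : ZMod q =>
        (f.map (Int.castRingHom (ZMod q))).eval x = 0 ∧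
        (g.map (Int.castRingHom (ZMod q))).eval x = 0).card = ℓ) :
    (q : ℤ) ^ (n - p) ∣ _root_.resultant f g ∧ n - p ≥ ℓ :=
  resultant_dvd_of_rank_general q f g n hn hmonic A hA p hp ℓ hℓ
end

section
/- Let q be a prime and let f(x), g(x) be polynomials with integer coefficients of degrees n and m respectively, with f monic, and each of f, g not identically zero in ℤ/qℤ. For 0 ≤ k ≤ n−1 let r_k(x) = r_{k,n−1}x^{n−1} + ⋯ + r_{k,0} be the remainder of x^k g(x) upon division by f(x), and let A be the n×n integer matrix whose row indexed by k (for k = n−1, n−2, …, 0) is (r_{k,n−1}, r_{k,n−2}, …, r_{k,0}). Suppose the reduction of A modulo q has rank p over the field ℤ/qℤ. Then for any k×k minor M of A with k > p, one has M ≡ 0 (mod q^{k−p}). -/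
open Polynomial

open Polynomial Finset Submodule Module Set

lemma det_vanish_aux {k p : ℕ} (hk : p < k)
    (M : Matrix (Fin k) (Fin k) ℤ) (Q : Fin p → Fin k → ℤ) (s : Finset (Fin k))
    (hs : s.card < k - p)
    (hM : ∀ i : Fin k, i ∉ s → ∃ c : Fin p → ℤ, M i = fun j => ∑ l, c l * Q l j) :
    M.det = 0 := by
  have hinj : Function.Injective ((↑) : ℤ → ℚ) := Int.cast_injective
  suffices h : (M.map ((↑) : ℤ → ℚ)).det = 0 by
    have h2 := RingHom.map_det (Int.castRingHom ℚ) M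
    simp only [RingHom.mapMatrix_apply, Int.coe_castRingHom, eq_intCast] at h2
    rw [h] at h2
    have h3 : ((M.det : ℤ) : ℚ) = ((0 : ℤ) : ℚ) := by rw [Int.cast_zero]; exact h2
    exact Int.cast_injective h3
  set Mq := M.map ((↑) : ℤ → ℚ) with hMq
  rw [← Matrix.exists_vecMul_eq_zero_iff]
  set t := sᶜ with hts
  have htc : p < t.card := by
    have h1 : t.card = k - s.card := by
      rw [hts, Finset.card_compl, Fintype.card_fin]
    have h2 : s.card ≤ k := le_trans (Finset.card_le_card (Finset.subset_univ s)) (by simp)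
    omega
  set Qq : Fin p → Fin k → ℚ := fun l j => ((Q l j : ℤ) : ℚ) with hQq
  have hw : ∀ i : ↥t, Mq (i : Fin k) ∈ span ℚ (Set.range Qq) := by
    rintro ⟨i, hi⟩
    obtain ⟨c, hc⟩ := hM i (Finset.mem_compl.mp hi)
    have : Mq i = ∑ l, ((c l : ℤ) : ℚ) • Qq l := by
      funext j
      simp only [Mq, Matrix.map_apply, hc, Finset.sum_apply, Pi.smul_apply, smul_eq_mul, hQq]
      push_cast
      rfl
    rw [this]
    exact sum_mem fun l _ => smul_mem _ _ (subset_span ⟨l, rfl⟩)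
  have hnli : ¬ LinearIndependent ℚ (fun i : ↥t => Mq (i : Fin k)) := by
    intro hli
    have h1 : finrank ℚ (span ℚ (Set.range fun i : ↥t => Mq (i : Fin k))) = t.card := by
      rw [finrank_span_eq_card hli, Fintype.card_coe]
    have hle : span ℚ (Set.range fun i : ↥t => Mq (i : Fin k)) ≤ span ℚ (Set.range Qq) := by
      rw [span_le]
      rintro x ⟨i, rfl⟩
      exact hw i
    have h2 := Submodule.finrank_mono hle
    have h3 : finrank ℚ (span ℚ (Set.range Qq)) ≤ p := by
      refine le_trans (finrank_span_le_card _) ?_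
      rw [Set.toFinset_range]
      exact le_trans (Finset.card_image_le) (by simp)
    omega
  obtain ⟨g, hg0, i0, hgi0⟩ := Fintype.not_linearIndependent_iff.mp hnli
  refine ⟨fun i => if h : i ∈ t then g ⟨i, h⟩ else 0, ?_, ?_⟩
  · intro hv
    apply hgi0
    have := congrFun hv (i0 : Fin k)
    simpa [i0.2] using this
  · funext j
    show (∑ i, (if h : i ∈ t then g ⟨i, h⟩ else 0) * Mq i j) = 0
    have hz := congrFun hg0 j
    simp only [Finset.sum_apply, Pi.smul_apply, smul_eq_mul, Pi.zero_apply] at hz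
    calc ∑ i, (if h : i ∈ t then g ⟨i, h⟩ else 0) * Mq i j
        = ∑ i ∈ t, (if h : i ∈ t then g ⟨i, h⟩ else 0) * Mq i j := by
          refine (Finset.sum_subset (Finset.subset_univ t) ?_).symm
          intro i _ hi
          simp [hi]
      _ = ∑ i ∈ t.attach, (if h : (i : Fin k) ∈ t then g ⟨i, h⟩ else 0) * Mq i j :=
          (Finset.sum_attach t _).symm
      _ = ∑ i : ↥t, g i * Mq (i : Fin k) j := by
          apply Finset.sum_congr rfl
          intro i _
          simp [i.2]
      _ = 0 := hz

lemma key_dvd {k p : ℕ} (q : ℕ) (hk : p < k)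
    (P : Fin k → Fin p → ℤ) (Q : Fin p → Fin k → ℤ) (E : Fin k → Fin k → ℤ)
    (B : Matrix (Fin k) (Fin k) ℤ)
    (hB : ∀ i j, B i j = q * E i j + ∑ l, P i l * Q l j) :
    (q : ℤ) ^ (k - p) ∣ B.det := by
  classical
  set vE : Fin k → Fin k → ℤ := E with hvE
  set vN : Fin k → Fin k → ℤ := fun i j => ∑ l, P i l * Q l j with hvN
  have hBfun : B = Matrix.of ((q : ℤ) • vE + vN) := by
    ext i j
    simp [hB i j, hvE, hvN]
  have hdet : B.det = (Matrix.detRowAlternating : (Fin k → ℤ) [⋀^Fin k]→ₗ[ℤ] ℤ)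
      ((q : ℤ) • vE + vN) := by rw [hBfun]; rfl
  rw [hdet]
  set f := (Matrix.detRowAlternating : (Fin k → ℤ) [⋀^Fin k]→ₗ[ℤ] ℤ) with hf
  have : f ((q : ℤ) • vE + vN) = ∑ s : Finset (Fin k), f (s.piecewise ((q : ℤ) • vE) vN) :=
    f.toMultilinearMap.map_add_univ _ _
  rw [this]
  apply Finset.dvd_sum
  intro s _
  have hsm : s.piecewise ((q : ℤ) • vE) vN
      = s.piecewise (fun i => (q : ℤ) • (s.piecewise vE vN) i) (s.piecewise vE vN) := by
    funext i
    by_cases h : i ∈ s <;> simp [Finset.piecewise, h]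
  rw [hsm]
  have := f.toMultilinearMap.map_piecewise_smul (fun _ => (q : ℤ)) (s.piecewise vE vN) s
  rw [show f (s.piecewise (fun i => (q : ℤ) • s.piecewise vE vN i) (s.piecewise vE vN))
      = (∏ _i ∈ s, (q : ℤ)) • f (s.piecewise vE vN) from this]
  rw [Finset.prod_const, smul_eq_mul]
  by_cases hcard : k - p ≤ s.card
  · exact Dvd.dvd.mul_right (pow_dvd_pow _ hcard) _
  · have : f (s.piecewise vE vN) = 0 := by
      apply det_vanish_aux hk (Matrix.of (s.piecewise vE vN)) Q s (by omega)
      intro i hi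
      refine ⟨P i, ?_⟩
      funext j
      simp [Finset.piecewise, hi, hvN]
    rw [this, mul_zero]
    exact dvd_zero _

/-- **Corollary 1, second part.** With `A` the `n × n` matrix of remainders
`r_k = x^k g mod f` (rows indexed by `k = n-1, …, 0`), if the reduction of `A`
mod `q` has rank `p`, then every `k × k` minor `M` of `A` with `k > p` satisfies
`M ≡ 0 (mod q^{k-p})`. -/
theorem minor_dvd_of_rank (q : ℕ) [Fact q.Prime] (f g : Polynomial ℤ) (n m : ℕ)
    (hn : f.natDegree = n) (hm : g.natDegree = m) (hmonic : f.Monic)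
    (hf : f.map (Int.castRingHom (ZMod q)) ≠ 0)
    (hg : g.map (Int.castRingHom (ZMod q)) ≠ 0)
    (A : Matrix (Fin n) (Fin n) ℤ)
    (hA : ∀ i j : Fin n,
      A i j = ((X ^ (n - 1 - (i : ℕ)) * g) %ₘ f).coeff (n - 1 - (j : ℕ)))
    (p : ℕ) (hp : (A.map (Int.cast : ℤ → ZMod q)).rank = p)
    (k : ℕ) (hk : k > p)
    (rows cols : Fin k → Fin n)
    (hrows : Function.Injective rows) (hcols : Function.Injective cols) :
    (q : ℤ) ^ (k - p) ∣ (A.submatrix rows cols).det := by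
  classical
  set Ab : Matrix (Fin n) (Fin n) (ZMod q) := A.map (Int.cast : ℤ → ZMod q) with hAb
  have hpt : (Matrix.transpose Ab).rank = p := by rw [Matrix.rank_transpose, hp]
  set W : Submodule (ZMod q) (Fin n → ZMod q) := LinearMap.range (Matrix.transpose Ab).mulVecLin with hWdef
  have hW : Module.finrank (ZMod q) W = p := hpt
  haveI : Module.Finite (ZMod q) W := inferInstance
  let b := Module.finBasisOfFinrankEq (ZMod q) W hW
  let c : Fin p → (Fin n → ZMod q) := fun l => (b l : Fin n → ZMod q)
  have hspan : Submodule.span (ZMod q) (Set.range c) = W := by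
    have h1 : Set.range c = W.subtype '' Set.range b := by
      rw [← Set.range_comp]; rfl
    rw [h1, Submodule.span_image, b.span_eq, Submodule.map_subtype_top]
  have hrowW : ∀ i, Ab i ∈ W := by
    intro i
    refine ⟨Pi.single i 1, ?_⟩
    funext j
    simp [Matrix.mulVecLin_apply, Matrix.mulVec_single, Matrix.transpose_apply]
  have hrow : ∀ i, ∃ lam : Fin p → ZMod q, ∑ l, lam l • c l = Ab i := by
    intro i
    have hmem := hrowW i
    rw [← hspan] at hmem
    exact (mem_span_range_iff_exists_fun _).mp hmem
  choose lam hlam using hrow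
  let lift : ZMod q → ℤ := Function.surjInv ZMod.intCast_surjective
  have hlift : ∀ x : ZMod q, ((lift x : ℤ) : ZMod q) = x :=
    Function.surjInv_eq _
  set P : Fin n → Fin p → ℤ := fun i l => lift (lam i l) with hP
  set Qm : Fin p → Fin n → ℤ := fun l j => lift (c l j) with hQm
  set N : Fin n → Fin n → ℤ := fun i j => ∑ l, P i l * Qm l j with hN
  have hNc : ∀ i j, ((N i j : ℤ) : ZMod q) = ((A i j : ℤ) : ZMod q) := by
    intro i j
    calc ((N i j : ℤ) : ZMod q) = ∑ l, lam i l * c l j := by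
          rw [hN]
          push_cast
          simp [hP, hQm, hlift]
      _ = (∑ l, lam i l • c l) j := by simp
      _ = Ab i j := by rw [hlam i]
      _ = ((A i j : ℤ) : ZMod q) := rfl
  have hdvd : ∀ i j, (q : ℤ) ∣ (A i j - N i j) := by
    intro i j
    rw [← ZMod.intCast_zmod_eq_zero_iff_dvd]
    push_cast
    rw [hNc i j]
    ring
  set E : Fin n → Fin n → ℤ := fun i j => (A i j - N i j) / q with hEdef
  have hE : ∀ i j, A i j = q * E i j + N i j := by
    intro i j
    have h2 : (q : ℤ) * E i j = A i j - N i j := Int.mul_ediv_cancel' (hdvd i j)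
    linarith
  exact key_dvd q hk (fun i l => P (rows i) l) (fun l j => Qm l (cols j))
    (fun i j => E (rows i) (cols j)) _ (fun i j => hE (rows i) (cols j))
end

section
/- Let f(x) = a_n x^n + ⋯ + a_0 be a polynomial of degree n with integer coefficients and let q be an odd prime. Suppose a_0 is not divisible by q and the congruence f(x) ≡ 0 (mod q) has exactly ℓ solutions x in ℤ/qℤ. Then R(f(x), x^{q−1} − 1) ≡ 0 (mod q^ℓ). -/
open Polynomial

/-!
Mathlib's resultant is the same determinant, with rows and columns listed in reverse order. Work
in `ZMod (q ^ ℓ)`. The `ℓ` roots `x` of `f` modulo `q` are nonzero, so each has a lift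
`r x = k ^ q ^ (ℓ - 1)` (with `k` any lift of `x`) that is a root of `X ^ (q - 1) - 1` by Euler's
theorem; distinct lifts differ by units. Hence `∏ (X - r x)` divides `X ^ (q - 1) - 1`, and the
multiplicativity of the resultant gives `∏ f (r x) ∣ R(f, X ^ (q - 1) - 1)`. Each `f (r x)` is a
multiple of `q`, so the product is a multiple of `q ^ ℓ = 0`.
-/

theorem sylvesterMatrix_submatrix_revPerm (f g : ℤ[X]) :
    (sylvesterMatrix f g).submatrix ((finCongr (add_comm _ _)).trans Fin.revPerm)
        ((finCongr (add_comm _ _)).trans Fin.revPerm) =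
      (sylvester f g f.natDegree g.natDegree).transpose := by
  ext i j
  induction i using Fin.addCases <;>
  · simp only [sylvesterMatrix, sylvester, Matrix.submatrix_apply, Matrix.transpose_apply,
      Matrix.of_apply, Fin.addCases_left, Fin.addCases_right, Equiv.trans_apply, finCongr_apply,
      Fin.revPerm_apply, Fin.val_rev, Fin.val_cast, Fin.val_castAdd, Fin.val_natAdd, Set.mem_Icc]
    split_ifs <;> first | rfl | omega | (congr 1; omega)

theorem resultant_eq_polynomial_resultant (f g : ℤ[X]) :
    _root_.resultant f g = Polynomial.resultant f g := by
  rw [_root_.resultant, Polynomial.resultant, ← Matrix.det_transpose (sylvester _ _ _ _),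
    ← sylvesterMatrix_submatrix_revPerm, Matrix.det_submatrix_equiv_self]

namespace Polynomial

variable {R ι : Type*} [CommRing R] {s : Finset ι} {r : ι → R}

theorem prod_X_sub_C_dvd_of_isUnit_sub {g : R[X]} (hroot : ∀ i ∈ s, g.IsRoot (r i))
    (hsub : (s : Set ι).Pairwise fun i j => IsUnit (r i - r j)) :
    ∏ i ∈ s, (X - C (r i)) ∣ g :=
  Finset.prod_dvd_of_coprime
    (fun _ hi _ hj hij => isCoprime_X_sub_C_of_isUnit_sub (hsub hi hj hij))
    fun i hi => dvd_iff_isRoot.2 (hroot i hi)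

theorem prod_eval_dvd_resultant_of_isUnit_sub {f g : R[X]} {m : ℕ} (hm : f.natDegree ≤ m)
    (hg : g.Monic) (hroot : ∀ i ∈ s, g.IsRoot (r i))
    (hsub : (s : Set ι).Pairwise fun i j => IsUnit (r i - r j)) :
    ∏ i ∈ s, f.eval (r i) ∣ f.resultant g m := by
  nontriviality R
  obtain ⟨h, rfl⟩ := prod_X_sub_C_dvd_of_isUnit_sub hroot hsub
  have hP : (∏ i ∈ s, (X - C (r i))).Monic := monic_prod_of_monic _ _ fun i _ => monic_X_sub_C _
  rw [hP.natDegree_mul (hP.of_mul_monic_left hg), resultant_mul_right _ _ _ _ hm,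
    resultant_prod_right _ _ _ _ hm (by simp [fun i => (monic_X_sub_C (r i)).leadingCoeff])]
  simp only [natDegree_X_sub_C, resultant_X_sub_C_right _ _ _ hm, Finset.prod_mul_distrib]
  exact (dvd_mul_left _ _).mul_right _

end Polynomial

namespace ZMod

variable {p ℓ : ℕ} [Fact p.Prime]

theorem isUnit_of_castHom_ne_zero (hℓ : ℓ ≠ 0) {z : ZMod (p ^ ℓ)}
    (hz : castHom (dvd_pow_self p hℓ) (ZMod p) z ≠ 0) : IsUnit z := by
  have : NeZero (p ^ ℓ) := ⟨pow_ne_zero _ (Fact.out : p.Prime).ne_zero⟩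
  obtain ⟨k, rfl⟩ := natCast_zmod_surjective z
  rw [map_natCast, Ne, natCast_eq_zero_iff] at hz
  exact (isUnit_natCast_iff_not_dvd_pow Fact.out (Nat.pos_of_ne_zero hℓ)).2 hz

theorem natCast_dvd_of_castHom_eq_zero (hℓ : ℓ ≠ 0) {z : ZMod (p ^ ℓ)}
    (hz : castHom (dvd_pow_self p hℓ) (ZMod p) z = 0) : (p : ZMod (p ^ ℓ)) ∣ z := by
  have : NeZero (p ^ ℓ) := ⟨pow_ne_zero _ (Fact.out : p.Prime).ne_zero⟩
  obtain ⟨k, rfl⟩ := natCast_zmod_surjective z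
  rw [map_natCast, natCast_eq_zero_iff] at hz
  exact Nat.cast_dvd_cast hz

theorem natCast_dvd_eval_map_of_isRoot (hℓ : ℓ ≠ 0) {f : ℤ[X]} {r : ZMod (p ^ ℓ)}
    (hr : (f.map (Int.castRingHom (ZMod p))).IsRoot (castHom (dvd_pow_self p hℓ) (ZMod p) r)) :
    (p : ZMod (p ^ ℓ)) ∣ (f.map (Int.castRingHom (ZMod (p ^ ℓ)))).eval r := by
  apply natCast_dvd_of_castHom_eq_zero hℓ
  rwa [eval_map, hom_eval₂, RingHom.ext_int (RingHom.comp _ _) (Int.castRingHom _), ← eval_map]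

theorem exists_castHom_eq_and_pow_eq_one (hℓ : ℓ ≠ 0) {x : ZMod p} (hx : x ≠ 0) :
    ∃ r : ZMod (p ^ ℓ), castHom (dvd_pow_self p hℓ) (ZMod p) r = x ∧ r ^ (p - 1) = 1 := by
  obtain ⟨k, rfl⟩ := natCast_zmod_surjective x
  have hk : IsUnit (k : ZMod (p ^ ℓ)) := isUnit_of_castHom_ne_zero hℓ (by rwa [map_natCast])
  refine ⟨(k : ZMod (p ^ ℓ)) ^ p ^ (ℓ - 1), by rw [map_pow, map_natCast, pow_card_pow], ?_⟩
  rw [← pow_mul, ← Nat.totient_prime_pow Fact.out (Nat.pos_of_ne_zero hℓ), ← hk.unit_spec,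
    ← Units.val_pow_eq_pow_val, pow_totient, Units.val_one]

end ZMod

theorem resultant_pow_qsub1_dvd_general (q : ℕ) [Fact q.Prime]
    (f : Polynomial ℤ)
    (ha0 : ¬ (q : ℤ) ∣ f.coeff 0)
    (ℓ : ℕ)
    (hℓ : (Finset.univ.filter fun x : ZMod q =>
        (f.map (Int.castRingHom (ZMod q))).eval x = 0).card = ℓ) :
    (q : ℤ) ^ ℓ ∣ _root_.resultant f (X ^ (q - 1) - 1) := by
  obtain rfl | hℓ0 := eq_or_ne ℓ 0
  · simp
  have : Fact (1 < q ^ ℓ) := ⟨Nat.one_lt_pow hℓ0 (Fact.out : q.Prime).one_lt⟩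
  set s := Finset.univ.filter fun x : ZMod q => (f.map (Int.castRingHom (ZMod q))).eval x = 0
  set φ := Int.castRingHom (ZMod (q ^ ℓ))
  have hs0 : ∀ x ∈ s, x ≠ 0 := by
    rintro x hx rfl
    simp only [s, Finset.mem_filter, eval_map, eval₂_at_zero] at hx
    exact ha0 ((ZMod.intCast_zmod_eq_zero_iff_dvd _ _).1 hx.2)
  choose! r hr hr1 using fun x hx => ZMod.exists_castHom_eq_and_pow_eq_one hℓ0 (hs0 x hx)
  have hg : (X ^ (q - 1) - 1 : ℤ[X]).Monic :=
    monic_X_pow_sub_C 1 (Nat.sub_ne_zero_of_lt (Fact.out : q.Prime).one_lt)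
  have hdvd : ∏ x ∈ s, (f.map φ).eval (r x) ∣ φ (Polynomial.resultant f (X ^ (q - 1) - 1)) := by
    rw [← resultant_map_map, ← hg.natDegree_map φ]
    refine prod_eval_dvd_resultant_of_isUnit_sub natDegree_map_le (hg.map φ) ?_ ?_
    · intro x hx
      simp [hr1 x hx]
    · intro x hx y hy hxy
      refine ZMod.isUnit_of_castHom_ne_zero hℓ0 ?_
      rwa [map_sub, hr x hx, hr y hy, sub_ne_zero]
  have hprod : ∏ x ∈ s, (f.map φ).eval (r x) = 0 := by
    have := Finset.prod_dvd_prod_of_dvd _ _ fun x hx =>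
      ZMod.natCast_dvd_eval_map_of_isRoot hℓ0 ((hr x hx).symm ▸ (Finset.mem_filter.1 hx).2)
    rwa [Finset.prod_const, hℓ, ← Nat.cast_pow, ZMod.natCast_self, zero_dvd_iff] at this
  rw [resultant_eq_polynomial_resultant, ← Int.natCast_pow, ← ZMod.intCast_zmod_eq_zero_iff_dvd]
  exact zero_dvd_iff.1 (hprod ▸ hdvd)

/-- **Theorem 2.** Let `f` be an integer polynomial of degree `n`, `q` an odd prime
with `q ∤ a_0`. If `f(x) ≡ 0 (mod q)` has exactly `ℓ` solutions in `ℤ/qℤ`, then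
`R(f(x), x^{q-1} - 1) ≡ 0 (mod q^ℓ)`. -/
theorem resultant_pow_qsub1_dvd (q : ℕ) [Fact q.Prime] (hodd : Odd q)
    (f : Polynomial ℤ) (n : ℕ) (hn : f.natDegree = n)
    (ha0 : ¬ (q : ℤ) ∣ f.coeff 0)
    (ℓ : ℕ)
    (hℓ : (Finset.univ.filter fun x : ZMod q =>
        (f.map (Int.castRingHom (ZMod q))).eval x = 0).card = ℓ) :
    (q : ℤ) ^ ℓ ∣ _root_.resultant f (X ^ (q - 1) - 1) :=
  resultant_pow_qsub1_dvd_general q f ha0 ℓ hℓ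
end

section
/- Let q be an odd prime and let P, Q be integers with Q not divisible by q. If the Legendre symbol ((P² − 4Q)/q) equals 1, then V_{q−1}(P, Q) ≡ Q^{q−1} + 1 (mod q²). -/
/-!
Over a commutative ring containing roots `α, β` of `X² - P X + Q` one has `V_n = αⁿ + βⁿ` and
`(α - β) U_n = αⁿ - βⁿ`, where `U` is the Lucas sequence of the first kind. In the ring
`ℤ[X]/(X² - P X + Q)` this yields the integer identity `V_n² - (P² - 4Q) U_n² = 4 Qⁿ`.
When `P² - 4Q` is a nonzero square mod `q`, the roots lie in `𝔽_q` and are distinct and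
nonzero, so Fermat's little theorem gives `V_{q-1} ≡ 2` and `U_{q-1} ≡ 0 (mod q)`. Hence, with
`R = Q^{q-1} + 1`, the product
`(R - V_{q-1}) (R + V_{q-1}) = (Q^{q-1} - 1)² - (P² - 4Q) U_{q-1}²`
is divisible by `q²`, while `R + V_{q-1} ≡ 4` is prime to `q`.
-/

/-- The Lucas sequence of the second kind `V_n(P, Q)`:
`V_0 = 2`, `V_1 = P`, `V_i = P * V_{i-1} - Q * V_{i-2}`. -/
def lucasV (P Q : ℤ) : ℕ → ℤ
  | 0 => 2
  | 1 => P
  | n + 2 => P * lucasV P Q (n + 1) - Q * lucasV P Q n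

def lucasU (P Q : ℤ) : ℕ → ℤ
  | 0 => 0
  | 1 => 1
  | n + 2 => P * lucasU P Q (n + 1) - Q * lucasU P Q n

section Roots

variable {R : Type*} [CommRing R] {P Q : ℤ} {α β : R}

theorem lucasV_cast_eq_pow_add_pow (hsum : α + β = P) (hprod : α * β = Q) (n : ℕ) :
    (lucasV P Q n : R) = α ^ n + β ^ n := by
  induction n using Nat.twoStepInduction with
  | zero => simp only [lucasV, Int.cast_ofNat, pow_zero]; norm_num
  | one => simp [lucasV, hsum]
  | more n ih₀ ih₁ =>
    rw [lucasV, Int.cast_sub, Int.cast_mul, Int.cast_mul, ih₀, ih₁, ← hsum, ← hprod]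
    ring

theorem sub_mul_lucasU_cast_eq_pow_sub_pow (hsum : α + β = P) (hprod : α * β = Q) (n : ℕ) :
    (α - β) * lucasU P Q n = α ^ n - β ^ n := by
  induction n using Nat.twoStepInduction with
  | zero => simp [lucasU]
  | one => simp [lucasU]
  | more n ih₀ ih₁ =>
    rw [lucasU, Int.cast_sub, Int.cast_mul, Int.cast_mul, ← hsum, ← hprod]
    linear_combination (α + β) * ih₁ - α * β * ih₀

end Roots

open Polynomial in
theorem lucasV_sq_sub_mul_lucasU_sq (P Q : ℤ) (n : ℕ) :
    lucasV P Q n ^ 2 - (P ^ 2 - 4 * Q) * lucasU P Q n ^ 2 = 4 * Q ^ n := by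
  set f : ℤ[X] := C 1 * X ^ 2 + C (-P) * X + C Q
  have hf : f.degree ≠ 0 := by rw [degree_quadratic one_ne_zero]; decide
  set α : AdjoinRoot f := AdjoinRoot.root f
  set β : AdjoinRoot f := P - α
  have hroot : α ^ 2 - P * α + Q = 0 := by
    have := AdjoinRoot.eval₂_root f
    simp only [f, eval₂_add, eval₂_mul, eval₂_C, eval₂_X, eval₂_pow] at this
    simpa [sub_eq_add_neg] using this
  have hsum : α + β = P := add_sub_cancel α _
  have hprod : α * β = Q := by linear_combination -hroot
  have hdisc : (α - β) ^ 2 = P ^ 2 - 4 * Q := by linear_combination 4 * hroot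
  have hU := sub_mul_lucasU_cast_eq_pow_sub_pow hsum hprod n
  apply AdjoinRoot.of.injective_of_degree_ne_zero hf
  simp only [map_sub, map_mul, map_pow, map_ofNat, AdjoinRoot.of, eq_intCast]
  rw [lucasV_cast_eq_pow_add_pow hsum hprod, ← hdisc, ← hprod, mul_pow]
  linear_combination (-((α - β) * lucasU P Q n + (α ^ n - β ^ n))) * hU

theorem exists_add_eq_and_mul_eq_and_sub_eq {K : Type*} [Field K] (h2 : (2 : K) ≠ 0)
    {b c s : K} (hs : b ^ 2 - 4 * c = s * s) :
    ∃ α β : K, α + β = b ∧ α * β = c ∧ α - β = s :=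
  ⟨(b + s) / 2, (b - s) / 2, by field_simp; ring, by field_simp; linear_combination hs,
    by field_simp; ring⟩

section ZModPrime

variable {p : ℕ} [Fact p.Prime] {P Q : ℤ} {α β : ZMod p}

theorem exists_distinct_roots_of_legendreSym_eq_one (hp : p ≠ 2)
    (hleg : legendreSym p (P ^ 2 - 4 * Q) = 1) :
    ∃ α β : ZMod p, α + β = P ∧ α * β = Q ∧ α ≠ β := by
  have hD : ((P ^ 2 - 4 * Q : ℤ) : ZMod p) ≠ 0 := fun h => by
    simp [(legendreSym.eq_zero_iff p _).mpr h] at hleg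
  obtain ⟨s, hs⟩ := (legendreSym.eq_one_iff p hD).mp hleg
  have h2 : (2 : ZMod p) ≠ 0 := Ring.two_ne_zero (by rwa [ZMod.ringChar_zmod_n])
  obtain ⟨α, β, hsum, hprod, hdiff⟩ :=
    exists_add_eq_and_mul_eq_and_sub_eq h2 (b := (P : ZMod p)) (c := Q)
      (by push_cast at hs; exact hs)
  exact ⟨α, β, hsum, hprod, fun h => hD (by rw [hs, ← hdiff, h, sub_self, zero_mul])⟩

theorem lucasV_sub_one_cast_eq_two (hsum : α + β = P) (hprod : α * β = Q)
    (hQ : (Q : ZMod p) ≠ 0) : (lucasV P Q (p - 1) : ZMod p) = 2 := by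
  have hα : α ≠ 0 := by rintro rfl; simp_all
  have hβ : β ≠ 0 := by rintro rfl; simp_all
  rw [lucasV_cast_eq_pow_add_pow hsum hprod, ZMod.pow_card_sub_one_eq_one hα,
    ZMod.pow_card_sub_one_eq_one hβ, one_add_one_eq_two]

theorem lucasU_sub_one_cast_eq_zero (hsum : α + β = P) (hprod : α * β = Q)
    (hQ : (Q : ZMod p) ≠ 0) (hne : α ≠ β) : (lucasU P Q (p - 1) : ZMod p) = 0 := by
  have hα : α ≠ 0 := by rintro rfl; simp_all
  have hβ : β ≠ 0 := by rintro rfl; simp_all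
  have h := sub_mul_lucasU_cast_eq_pow_sub_pow hsum hprod (p - 1)
  rw [ZMod.pow_card_sub_one_eq_one hα, ZMod.pow_card_sub_one_eq_one hβ, sub_self] at h
  exact (mul_eq_zero.mp h).resolve_left (sub_ne_zero.mpr hne)

end ZModPrime

theorem Int.modEq_add_one_of_sq_sub_mul_sq_eq {p V U D W : ℤ} (hp : Prime p) (hp2 : ¬ p ∣ 2)
    (h : V ^ 2 - D * U ^ 2 = 4 * W) (hU : p ∣ U) (hV : V ≡ 2 [ZMOD p]) (hW : W ≡ 1 [ZMOD p]) :
    V ≡ W + 1 [ZMOD p ^ 2] := by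
  have hdvd : p ^ 2 ∣ (W + 1 - V) * (W + 1 + V) := by
    rw [show (W + 1 - V) * (W + 1 + V) = (W - 1) ^ 2 - D * U ^ 2 by linear_combination -h]
    exact dvd_sub (pow_dvd_pow_of_dvd hW.symm.dvd 2) ((pow_dvd_pow_of_dvd hU 2).mul_left D)
  have hndvd : ¬ p ∣ W + 1 + V := fun hd => hp2 <| hp.dvd_of_dvd_pow (n := 2) <| by
    convert dvd_sub hd (dvd_add hW.symm.dvd hV.symm.dvd) using 1
    ring
  have hcop : IsCoprime (p ^ 2) (W + 1 + V) := ((hp.coprime_iff_not_dvd).mpr hndvd).pow_left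
  exact Int.modEq_iff_dvd.mpr (hcop.dvd_of_dvd_mul_right hdvd)

/-- **Theorem 4, (12).** If `q` is an odd prime, `q ∤ Q` and `(P² - 4Q / q) = 1`,
then `V_{q-1}(P, Q) ≡ Q^{q-1} + 1 (mod q²)`. -/
theorem lucasV_qsub1_congr (q : ℕ) [Fact q.Prime] (hodd : Odd q) (P Q : ℤ)
    (hQ : ¬ (q : ℤ) ∣ Q) (hleg : legendreSym q (P ^ 2 - 4 * Q) = 1) :
    lucasV P Q (q - 1) ≡ Q ^ (q - 1) + 1 [ZMOD (q : ℤ) ^ 2] := by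
  have hq : q.Prime := Fact.out
  have hq' : Prime (q : ℤ) := Nat.prime_iff_prime_int.mp hq
  have hq2 : q ≠ 2 := by rintro rfl; exact absurd hodd (by decide)
  obtain ⟨α, β, hsum, hprod, hne⟩ := exists_distinct_roots_of_legendreSym_eq_one hq2 hleg
  have hQ' : (Q : ZMod q) ≠ 0 := mt (ZMod.intCast_zmod_eq_zero_iff_dvd Q q).mp hQ
  have hU : (q : ℤ) ∣ lucasU P Q (q - 1) :=
    (ZMod.intCast_zmod_eq_zero_iff_dvd _ q).mp (lucasU_sub_one_cast_eq_zero hsum hprod hQ' hne)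
  have hV : lucasV P Q (q - 1) ≡ 2 [ZMOD q] :=
    (ZMod.intCast_eq_intCast_iff _ 2 q).mp
      (by exact_mod_cast lucasV_sub_one_cast_eq_two hsum hprod hQ')
  have hW : Q ^ (q - 1) ≡ 1 [ZMOD q] :=
    Int.ModEq.pow_card_sub_one_eq_one hq (hq'.coprime_iff_not_dvd.mpr hQ).symm
  have h2 : ¬ (q : ℤ) ∣ 2 := by
    exact_mod_cast mt (Nat.prime_dvd_prime_iff_eq hq Nat.prime_two).mp hq2
  exact Int.modEq_add_one_of_sq_sub_mul_sq_eq hq' h2 (lucasV_sq_sub_mul_lucasU_sq P Q (q - 1))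
    hU hV hW
end

section
/- Let q be an odd prime and let P, Q be integers with Q not divisible by q. If the Legendre symbol ((P² − 4Q)/q) equals 1, then V_{(q−1)/2}(P, Q)² ≡ (Q^{(q−1)/2} + 1)² (mod q²). -/
/-!
Modulo `q²` the polynomial `X² - P X + Q` splits as `(X - a)(X - b)`: its discriminant is a
square mod `q` by hypothesis, and a square root mod `q` lifts to one mod `q²` since `q` is odd and
does not divide it. Then, for `m = (q - 1) / 2`, `V_m ≡ aᵐ + bᵐ` and `Qᵐ ≡ (ab)ᵐ`, and with
`x = aᵐ`, `y = bᵐ` the difference `(xy + 1)² - (x + y)² = (x² - 1)(y² - 1)` is a product of two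
multiples of `q` by Fermat's little theorem, as `2m = q - 1` and `q ∤ ab ≡ Q`.
-/

theorem lucasV_modEq_pow_add_pow {N P Q a b : ℤ} (hadd : a + b ≡ P [ZMOD N])
    (hmul : a * b ≡ Q [ZMOD N]) : ∀ n, lucasV P Q n ≡ a ^ n + b ^ n [ZMOD N]
  | 0 => by simp [lucasV]
  | 1 => by simpa [lucasV] using hadd.symm
  | n + 2 => by
    have ih₀ := lucasV_modEq_pow_add_pow hadd hmul n
    have ih₁ := lucasV_modEq_pow_add_pow hadd hmul (n + 1)
    calc lucasV P Q (n + 2) = P * lucasV P Q (n + 1) - Q * lucasV P Q n := rfl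
      _ ≡ (a + b) * (a ^ (n + 1) + b ^ (n + 1)) - a * b * (a ^ n + b ^ n) [ZMOD N] :=
        (hadd.symm.mul ih₁).sub (hmul.symm.mul ih₀)
      _ = a ^ (n + 2) + b ^ (n + 2) := by ring

theorem legendreSym.exists_sq_modEq_of_eq_one (p : ℕ) [Fact p.Prime] {D : ℤ}
    (h : legendreSym p D = 1) : ∃ y : ℤ, y ^ 2 ≡ D [ZMOD p] ∧ ¬ (p : ℤ) ∣ y := by
  have hD : (D : ZMod p) ≠ 0 := fun h0 => by
    simp [(legendreSym.eq_zero_iff p D).mpr h0] at h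
  obtain ⟨z, hz⟩ := (legendreSym.eq_one_iff p hD).mp h
  obtain ⟨y, rfl⟩ := ZMod.intCast_surjective z
  refine ⟨y, (ZMod.intCast_eq_intCast_iff _ _ _).mp (by push_cast; rw [hz, sq]), fun hy => ?_⟩
  rw [← ZMod.intCast_zmod_eq_zero_iff_dvd] at hy
  exact hD (by rw [hz, hy, mul_zero])

/-- One Hensel step: `s = y + t N` works as soon as `2 y t ≡ (D - y²) / N [ZMOD N]`. -/
theorem Int.exists_sq_modEq_sq_of_sq_modEq {N D y : ℤ} (hcop : IsCoprime (2 * y) N)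
    (h : y ^ 2 ≡ D [ZMOD N]) : ∃ s : ℤ, s ^ 2 ≡ D [ZMOD N ^ 2] := by
  obtain ⟨k, hk⟩ := Int.modEq_iff_dvd.mp h
  obtain ⟨u, v, huv⟩ := hcop
  refine ⟨y + u * k * N, Int.modEq_iff_dvd.mpr ⟨k * v - u ^ 2 * k ^ 2, ?_⟩⟩
  linear_combination hk - N * k * huv

theorem Int.exists_add_modEq_mul_modEq {N P Q s : ℤ} (hN : IsCoprime 2 N)
    (hs : s ^ 2 ≡ P ^ 2 - 4 * Q [ZMOD N]) :
    ∃ a b : ℤ, a + b ≡ P [ZMOD N] ∧ a * b ≡ Q [ZMOD N] := by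
  obtain ⟨w, hw⟩ := Int.modEq_iff_dvd.mp hs
  obtain ⟨h, v, hhv⟩ := hN
  refine ⟨(P + s) * h, (P - s) * h, Int.modEq_iff_dvd.mpr ⟨P * v, ?_⟩,
    Int.modEq_iff_dvd.mpr ⟨Q * v * (1 + 2 * h) - w * h ^ 2, ?_⟩⟩
  · linear_combination -P * hhv
  · linear_combination -h ^ 2 * hw - Q * (1 + 2 * h) * hhv

theorem Int.sq_add_modEq_sq_mul_add_one {N x y : ℤ} (hx : x ^ 2 ≡ 1 [ZMOD N])
    (hy : y ^ 2 ≡ 1 [ZMOD N]) : (x + y) ^ 2 ≡ (x * y + 1) ^ 2 [ZMOD N ^ 2] := by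
  obtain ⟨k, hk⟩ := Int.modEq_iff_dvd.mp hx
  obtain ⟨l, hl⟩ := Int.modEq_iff_dvd.mp hy
  refine Int.modEq_iff_dvd.mpr ⟨k * l, ?_⟩
  linear_combination (1 - y ^ 2) * hk + N * k * hl

/-- **Theorem 4, (13).** If `q` is an odd prime, `q ∤ Q` and `(P² - 4Q / q) = 1`,
then `V_{(q-1)/2}(P, Q)² ≡ (Q^{(q-1)/2} + 1)² (mod q²)`. -/
theorem lucasV_half_sq_congr (q : ℕ) [Fact q.Prime] (hodd : Odd q) (P Q : ℤ)
    (hQ : ¬ (q : ℤ) ∣ Q) (hleg : legendreSym q (P ^ 2 - 4 * Q) = 1) :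
    lucasV P Q ((q - 1) / 2) ^ 2 ≡ (Q ^ ((q - 1) / 2) + 1) ^ 2 [ZMOD (q : ℤ) ^ 2] := by
  have hq : Prime (q : ℤ) := Nat.prime_iff_prime_int.mp Fact.out
  have h2q : IsCoprime 2 (q : ℤ) := Int.isCoprime_two_left.mpr (by exact_mod_cast hodd)
  obtain ⟨y, hy, hqy⟩ := legendreSym.exists_sq_modEq_of_eq_one q hleg
  obtain ⟨s, hs⟩ := Int.exists_sq_modEq_sq_of_sq_modEq
    (h2q.mul_left ((hq.coprime_iff_not_dvd.mpr hqy).symm)) hy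
  obtain ⟨a, b, hadd, hmul⟩ := Int.exists_add_modEq_mul_modEq h2q.pow_right hs
  have hab : IsCoprime (a * b) q := by
    refine (hq.coprime_iff_not_dvd.mpr fun h => hQ ?_).symm
    exact (Int.ModEq.dvd_iff (hmul.of_dvd (dvd_pow_self _ two_ne_zero))).mp h
  set m := (q - 1) / 2
  have hm : q - 1 = m * 2 := by obtain ⟨r, hr⟩ := hodd; omega
  have fermat {c : ℤ} (hc : IsCoprime c q) : (c ^ m) ^ 2 ≡ 1 [ZMOD q] := by
    rw [← pow_mul, ← hm]
    exact Int.ModEq.pow_card_sub_one_eq_one Fact.out hc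
  calc lucasV P Q m ^ 2 ≡ (a ^ m + b ^ m) ^ 2 [ZMOD q ^ 2] :=
        (lucasV_modEq_pow_add_pow hadd hmul m).pow 2
    _ ≡ (a ^ m * b ^ m + 1) ^ 2 [ZMOD q ^ 2] :=
        Int.sq_add_modEq_sq_mul_add_one (fermat hab.of_mul_left_left)
          (fermat hab.of_mul_left_right)
    _ = ((a * b) ^ m + 1) ^ 2 := by rw [mul_pow]
    _ ≡ (Q ^ m + 1) ^ 2 [ZMOD q ^ 2] := ((hmul.pow m).add_right 1).pow 2
end

section
/- Let q be an odd prime and let k, P, Q be integers such that k² + Pk + Q is not divisible by q. If the Legendre symbol ((P² − 4Q)/q) equals 1, then V_{q−1}(P + 2k, k² + Pk + Q) ≡ (k² + Pk + Q)^{q−1} + 1 (mod q²). -/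
lemma lucasV_roots (a b : ℤ) : ∀ n, lucasV (a + b) (a * b) n = a ^ n + b ^ n
  | 0 => by simp [lucasV]
  | 1 => by simp [lucasV]
  | n + 2 => by
    simp only [lucasV, lucasV_roots a b (n + 1), lucasV_roots a b n]
    ring

lemma lucasV_congr (m P₁ Q₁ P₂ Q₂ : ℤ) (hP : P₁ ≡ P₂ [ZMOD m]) (hQ : Q₁ ≡ Q₂ [ZMOD m]) :
    ∀ n, lucasV P₁ Q₁ n ≡ lucasV P₂ Q₂ n [ZMOD m]
  | 0 => Int.ModEq.refl _
  | 1 => hP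
  | n + 2 => by
    simp only [lucasV]
    exact (hP.mul (lucasV_congr m P₁ Q₁ P₂ Q₂ hP hQ (n + 1))).sub
      (hQ.mul (lucasV_congr m P₁ Q₁ P₂ Q₂ hP hQ n))

lemma lucasV_key (q : ℕ) (hq : q.Prime) (hodd : Odd q) (P' Q' c : ℤ)
    (hQ : ¬ (q : ℤ) ∣ Q') (hc : (q : ℤ) ∣ c ^ 2 - (P' ^ 2 - 4 * Q'))
    (hqc : ¬ (q : ℤ) ∣ c) :
    lucasV P' Q' (q - 1) ≡ Q' ^ (q - 1) + 1 [ZMOD (q : ℤ) ^ 2] := by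
  have hprime : Prime (q : ℤ) := Nat.prime_iff_prime_int.mp hq
  have hnn2 : (q : ℤ) ∣ (q : ℤ) ^ 2 := ⟨(q : ℤ), sq (q : ℤ)⟩
  have hq2 : ¬ (q : ℤ) ∣ 2 := by
    intro hd
    have h2 : q ∣ 2 := by exact_mod_cast hd
    obtain ⟨m, hm⟩ := hodd
    have := Nat.le_of_dvd (by norm_num) h2
    have := hq.two_le
    omega
  have h2 : IsCoprime (2 : ℤ) (q : ℤ) := ((hprime.coprime_iff_not_dvd).mpr hq2).symm
  obtain ⟨i2, v2, hi2⟩ := h2.pow_right (n := 2)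
  -- hi2 : i2 * 2 + v2 * (q : ℤ) ^ 2 = 1
  set a₀ : ℤ := (P' + c) * i2 with ha₀
  set e : ℤ := 2 * a₀ - P' with he_def
  have he : (q : ℤ) ^ 2 ∣ e - c := ⟨-((P' + c) * v2), by
    simp only [he_def, ha₀]; linear_combination (P' + c) * hi2⟩
  have hen : (q : ℤ) ∣ e - c := dvd_trans hnn2 he
  have hF : (q : ℤ) ∣ a₀ ^ 2 - P' * a₀ + Q' := by
    have h4F : (q : ℤ) ∣ 4 * (a₀ ^ 2 - P' * a₀ + Q') := by
      have hid : 4 * (a₀ ^ 2 - P' * a₀ + Q')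
          = (e - c) * (e + c) + (c ^ 2 - (P' ^ 2 - 4 * Q')) := by
        simp only [he_def]; ring
      rw [hid]
      exact dvd_add (hen.mul_right _) hc
    have h4 : IsCoprime (q : ℤ) (4 : ℤ) := by
      have := (h2.mul_left h2).symm
      norm_num at this ⊢
      exact this
    exact h4.dvd_of_dvd_mul_left h4F
  have hqe : ¬ (q : ℤ) ∣ e := by
    intro h
    apply hqc
    have := dvd_sub h hen
    simpa using this
  obtain ⟨u, v, huv⟩ := ((hprime.coprime_iff_not_dvd).mpr hqe).symm.pow_right (n := 2)
  -- huv : u * e + v * (q : ℤ) ^ 2 = 1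
  set F : ℤ := a₀ ^ 2 - P' * a₀ + Q' with hFdef
  set a : ℤ := a₀ - F * u with hadef
  set b : ℤ := P' - a with hbdef
  have habP : a + b = P' := by simp only [hbdef]; ring
  have hfa : (q : ℤ) ^ 2 ∣ a ^ 2 - P' * a + Q' := by
    have key : a ^ 2 - P' * a + Q' = F * (1 - u * e) + F ^ 2 * u ^ 2 := by
      simp only [hadef, hFdef, he_def]; ring
    rw [key]
    refine dvd_add (Dvd.dvd.mul_left ⟨v, by linarith⟩ F) (Dvd.dvd.mul_right ?_ _)
    exact pow_dvd_pow_of_dvd hF 2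
  have hab : a * b ≡ Q' [ZMOD (q : ℤ) ^ 2] := by
    rw [Int.modEq_iff_dvd]
    have : Q' - a * b = a ^ 2 - P' * a + Q' := by simp only [hbdef]; ring
    rw [this]
    exact hfa
  have habn : (q : ℤ) ∣ Q' - a * b := dvd_trans hnn2 hab.dvd
  have hqa : ¬ (q : ℤ) ∣ a := by
    intro h
    apply hQ
    have := dvd_add habn (h.mul_right b)
    simpa using this
  have hqb : ¬ (q : ℤ) ∣ b := by
    intro h
    apply hQ
    have := dvd_add habn (h.mul_left a)
    simpa using this
  have hFa : (q : ℤ) ∣ a ^ (q - 1) - 1 :=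
    (Int.ModEq.pow_card_sub_one_eq_one hq
      ((hprime.coprime_iff_not_dvd).mpr hqa).symm).symm.dvd
  have hFb : (q : ℤ) ∣ b ^ (q - 1) - 1 :=
    (Int.ModEq.pow_card_sub_one_eq_one hq
      ((hprime.coprime_iff_not_dvd).mpr hqb).symm).symm.dvd
  have hmul : (q : ℤ) ^ 2 ∣ (a ^ (q - 1) - 1) * (b ^ (q - 1) - 1) := by
    rw [sq]; exact mul_dvd_mul hFa hFb
  have step3 : a ^ (q - 1) + b ^ (q - 1) ≡ (a * b) ^ (q - 1) + 1 [ZMOD (q : ℤ) ^ 2] := by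
    rw [Int.modEq_iff_dvd]
    have heq : (a * b) ^ (q - 1) + 1 - (a ^ (q - 1) + b ^ (q - 1))
        = (a ^ (q - 1) - 1) * (b ^ (q - 1) - 1) := by
      rw [mul_pow]; ring
    rw [heq]
    exact hmul
  have step4 : (a * b) ^ (q - 1) + 1 ≡ Q' ^ (q - 1) + 1 [ZMOD (q : ℤ) ^ 2] :=
    (hab.pow (q - 1)).add_right 1
  have step1 : lucasV P' Q' (q - 1) ≡ lucasV (a + b) (a * b) (q - 1) [ZMOD (q : ℤ) ^ 2] :=
    lucasV_congr ((q : ℤ) ^ 2) P' Q' (a + b) (a * b) (by rw [habP]) hab.symm (q - 1)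
  refine step1.trans ?_
  rw [lucasV_roots]
  exact step3.trans step4

/-- **Corollary 2, (15).** If `q` is an odd prime, `q ∤ k² + Pk + Q` and
`(P² - 4Q / q) = 1`, then
`V_{q-1}(P + 2k, k² + Pk + Q) ≡ (k² + Pk + Q)^{q-1} + 1 (mod q²)`. -/
theorem lucasV_shift_qsub1_congr (q : ℕ) [Fact q.Prime] (hodd : Odd q) (k P Q : ℤ)
    (hk : ¬ (q : ℤ) ∣ (k ^ 2 + P * k + Q)) (hleg : legendreSym q (P ^ 2 - 4 * Q) = 1) :
    lucasV (P + 2 * k) (k ^ 2 + P * k + Q) (q - 1) ≡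
      (k ^ 2 + P * k + Q) ^ (q - 1) + 1 [ZMOD (q : ℤ) ^ 2] := by
  have hq : q.Prime := Fact.out
  have hDne : ((P ^ 2 - 4 * Q : ℤ) : ZMod q) ≠ 0 := by
    intro h
    rw [(legendreSym.eq_zero_iff q _).mpr h] at hleg
    exact absurd hleg (by norm_num)
  obtain ⟨x, hx⟩ := (legendreSym.eq_one_iff q hDne).mp hleg
  set c : ℤ := (x.val : ℤ) with hcdef
  have hcast : ((c : ℤ) : ZMod q) = x := by
    simp [hcdef, ZMod.natCast_val, ZMod.cast_id]
  have hc : (q : ℤ) ∣ c ^ 2 - (P ^ 2 - 4 * Q) := by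
    rw [← ZMod.intCast_zmod_eq_zero_iff_dvd]
    push_cast
    push_cast at hx
    rw [hcast, hx]
    ring
  have hqc : ¬ (q : ℤ) ∣ c := by
    intro h
    apply hDne
    rw [hx]
    have : ((c : ℤ) : ZMod q) = 0 := (ZMod.intCast_zmod_eq_zero_iff_dvd _ _).mpr h
    rw [hcast] at this
    rw [this, mul_zero]
  have hc' : (q : ℤ) ∣ c ^ 2 - ((P + 2 * k) ^ 2 - 4 * (k ^ 2 + P * k + Q)) := by
    have : (P + 2 * k) ^ 2 - 4 * (k ^ 2 + P * k + Q) = P ^ 2 - 4 * Q := by ring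
    rw [this]
    exact hc
  exact lucasV_key q hq hodd (P + 2 * k) (k ^ 2 + P * k + Q) c hk hc' hqc
end

section
/- Let q be an odd prime and let k, P, Q be integers such that k² + Pk + Q is not divisible by q. If the Legendre symbol ((P² − 4Q)/q) equals 1, then V_{(q−1)/2}(P + 2k, k² + Pk + Q)² ≡ ((k² + Pk + Q)^{(q−1)/2} + 1)² (mod q²). -/
theorem lucasV_eq_pow_add_pow {R : Type*} [CommRing R] {P Q : ℤ} {α β : R}
    (hsum : α + β = P) (hprod : α * β = Q) (n : ℕ) : (lucasV P Q n : R) = α ^ n + β ^ n := by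
  induction n using Nat.twoStepInduction with
  | zero => norm_num [lucasV]
  | one => simpa [lucasV] using hsum.symm
  | more n ih₁ ih₂ =>
    rw [lucasV, Int.cast_sub, Int.cast_mul, Int.cast_mul, ih₁, ih₂, ← hsum, ← hprod]
    ring

theorem exists_add_eq_and_mul_eq_of_sq_eq_discrim {R : Type*} [CommRing R] (h2 : IsUnit (2 : R))
    {P Q s : R} (hs : s ^ 2 = P ^ 2 - 4 * Q) : ∃ α β : R, α + β = P ∧ α * β = Q := by
  obtain ⟨u, hu⟩ := h2.exists_right_inv
  refine ⟨u * (P + s), u * (P - s), by linear_combination P * hu, ?_⟩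
  linear_combination (-u ^ 2) * hs + Q * (2 * u + 1) * hu

theorem exists_sq_sub_dvd_sq_of_dvd_sq_sub {R : Type*} [CommRing R] {a t D : R}
    (hdvd : a ∣ t ^ 2 - D) (hcop : IsCoprime (2 * t) a) : ∃ s : R, a ^ 2 ∣ s ^ 2 - D := by
  obtain ⟨c, hc⟩ := hdvd
  obtain ⟨u, v, huv⟩ := hcop
  -- one Newton step `s = t - (t² - D) / (2t)`, with `u` an inverse of `2t` modulo `a`
  refine ⟨t - u * (t ^ 2 - D), c * v + u ^ 2 * c ^ 2, ?_⟩
  linear_combination (1 - 2 * u * t + u ^ 2 * (t ^ 2 - D + a * c)) * hc - a * c * huv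

theorem exists_sq_sub_dvd_sq_of_legendreSym_eq_one {q : ℕ} [Fact q.Prime] (hodd : Odd q) {D : ℤ}
    (hD : legendreSym q D = 1) : ∃ s : ℤ, (q : ℤ) ^ 2 ∣ s ^ 2 - D := by
  have hq : Prime (q : ℤ) := Nat.prime_iff_prime_int.mp Fact.out
  have hD0 : (D : ZMod q) ≠ 0 := by
    rw [Ne, ← legendreSym.eq_zero_iff]
    omega
  obtain ⟨r, hr⟩ := (legendreSym.eq_one_iff q hD0).mp hD
  obtain ⟨t, rfl⟩ := ZMod.intCast_surjective r
  have hdvd : (q : ℤ) ∣ t ^ 2 - D := by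
    rw [← ZMod.intCast_zmod_eq_zero_iff_dvd]
    push_cast
    rw [hr]
    ring
  refine exists_sq_sub_dvd_sq_of_dvd_sq_sub hdvd (IsCoprime.symm (hq.coprime_iff_not_dvd.mpr ?_))
  rintro h2t
  rcases hq.dvd_or_dvd h2t with h2 | ht
  · have := Nat.le_of_dvd two_pos (Int.natCast_dvd_natCast.mp h2)
    have := (Fact.out : q.Prime).two_le
    obtain ⟨_, _⟩ := hodd
    omega
  · apply hD0
    rw [ZMod.intCast_zmod_eq_zero_iff_dvd]
    simpa using dvd_sub (dvd_pow ht two_ne_zero) hdvd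

theorem ZMod.mul_eq_zero_of_castHom_eq_zero {n : ℕ} {x y : ZMod (n ^ 2)}
    (hx : ZMod.castHom (dvd_pow_self n two_ne_zero) (ZMod n) x = 0)
    (hy : ZMod.castHom (dvd_pow_self n two_ne_zero) (ZMod n) y = 0) : x * y = 0 := by
  obtain ⟨a, rfl⟩ := ZMod.intCast_surjective x
  obtain ⟨b, rfl⟩ := ZMod.intCast_surjective y
  rw [map_intCast, ZMod.intCast_zmod_eq_zero_iff_dvd] at hx hy
  rw [← Int.cast_mul, ZMod.intCast_zmod_eq_zero_iff_dvd, Nat.cast_pow, sq]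
  exact mul_dvd_mul hx hy

theorem ZMod.sq_pow_add_pow_eq_sq_mul_pow_add_one {q : ℕ} [Fact q.Prime] (hodd : Odd q)
    {α β : ZMod (q ^ 2)} (hαβ : ZMod.castHom (dvd_pow_self q two_ne_zero) (ZMod q) (α * β) ≠ 0) :
    (α ^ ((q - 1) / 2) + β ^ ((q - 1) / 2)) ^ 2 = ((α * β) ^ ((q - 1) / 2) + 1) ^ 2 := by
  set φ := ZMod.castHom (dvd_pow_self q two_ne_zero) (ZMod q)
  have fermat {x : ZMod (q ^ 2)} (hx : φ x ≠ 0) : φ (x ^ (q - 1) - 1) = 0 := by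
    rw [map_sub, map_pow, map_one, ZMod.pow_card_sub_one_eq_one hx, sub_self]
  rw [map_mul] at hαβ
  have key := ZMod.mul_eq_zero_of_castHom_eq_zero (fermat (left_ne_zero_of_mul hαβ))
    (fermat (right_ne_zero_of_mul hαβ))
  rw [← Nat.div_two_mul_two_of_even (n := q - 1) (Nat.Odd.sub_odd hodd odd_one), pow_mul,
    pow_mul] at key
  linear_combination -key

/-- **Corollary 2, (16).** If `q` is an odd prime, `q ∤ k² + Pk + Q` and
`(P² - 4Q / q) = 1`, then
`V_{(q-1)/2}(P + 2k, k² + Pk + Q)² ≡ ((k² + Pk + Q)^{(q-1)/2} + 1)² (mod q²)`. -/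
theorem lucasV_shift_half_sq_congr (q : ℕ) [Fact q.Prime] (hodd : Odd q) (k P Q : ℤ)
    (hk : ¬ (q : ℤ) ∣ (k ^ 2 + P * k + Q)) (hleg : legendreSym q (P ^ 2 - 4 * Q) = 1) :
    lucasV (P + 2 * k) (k ^ 2 + P * k + Q) ((q - 1) / 2) ^ 2 ≡
      ((k ^ 2 + P * k + Q) ^ ((q - 1) / 2) + 1) ^ 2 [ZMOD (q : ℤ) ^ 2] := by
  obtain ⟨s, hs⟩ := exists_sq_sub_dvd_sq_of_legendreSym_eq_one hodd hleg
  have h2 : IsUnit (2 : ZMod (q ^ 2)) := by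
    simpa using (ZMod.isUnit_iff_coprime 2 (q ^ 2)).mpr (Nat.coprime_two_left.mpr hodd.pow)
  -- the shift `x ↦ x + k` leaves the discriminant `P² - 4Q` unchanged
  have hdisc : (s : ZMod (q ^ 2)) ^ 2 =
      ((P + 2 * k : ℤ) : ZMod (q ^ 2)) ^ 2 - 4 * ((k ^ 2 + P * k + Q : ℤ) : ZMod (q ^ 2)) := by
    have hs' := (ZMod.intCast_zmod_eq_zero_iff_dvd _ (q ^ 2)).mpr (by exact_mod_cast hs)
    push_cast at hs' ⊢
    linear_combination hs'
  obtain ⟨α, β, hsum, hprod⟩ := exists_add_eq_and_mul_eq_of_sq_eq_discrim h2 hdisc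
  have hαβ : ZMod.castHom (dvd_pow_self q two_ne_zero) (ZMod q) (α * β) ≠ 0 := by
    rwa [hprod, map_intCast, Ne, ZMod.intCast_zmod_eq_zero_iff_dvd]
  have key := ZMod.sq_pow_add_pow_eq_sq_mul_pow_add_one hodd hαβ
  rw [← lucasV_eq_pow_add_pow hsum hprod, hprod] at key
  rw [← Nat.cast_pow, ← ZMod.intCast_eq_intCast_iff]
  exact_mod_cast key
end

section
/- Let q be an odd prime with q ≡ 1 (mod 5) or q ≡ −1 (mod 5), and let k be an integer such that k² + k − 1 is not divisible by q. Then V_{(q−1)/2}(1 + 2k, k² + k − 1)² ≡ (k² + k − 1)^{q−1} + 2(k² + k − 1)^{(q−1)/2} + 1 (mod q²). -/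
private instance fact_prime_five : Fact (Nat.Prime 5) := ⟨by norm_num⟩

/-- If `a + b = P` and `a * b ≡ Q (mod N)`, then `V_n(P,Q) ≡ a^n + b^n (mod N)`. -/
private lemma lucasV_modEq {P Q N a b : ℤ} (hs : a + b = P) (hp : a * b ≡ Q [ZMOD N]) :
    ∀ n : ℕ, lucasV P Q n ≡ a ^ n + b ^ n [ZMOD N] := by
  intro n
  induction n using Nat.twoStepInduction with
  | zero => simp [lucasV]
  | one => simp [lucasV, ← hs]
  | more n ih1 ih2 =>
    have h : lucasV P Q (n + 2) = P * lucasV P Q (n + 1) - Q * lucasV P Q n := rfl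
    rw [h]
    have key : P * (a ^ (n + 1) + b ^ (n + 1)) - a * b * (a ^ n + b ^ n)
        = a ^ (n + 2) + b ^ (n + 2) := by rw [← hs]; ring
    calc P * lucasV P Q (n + 1) - Q * lucasV P Q n
        ≡ P * (a ^ (n + 1) + b ^ (n + 1)) - a * b * (a ^ n + b ^ n) [ZMOD N] :=
          ((Int.ModEq.refl P).mul ih2).sub (hp.symm.mul ih1)
      _ = a ^ (n + 2) + b ^ (n + 2) := key

/-- There is a root of `x² + x - 1` modulo `q²` when `q ≡ ±1 (mod 5)`. -/
private lemma exists_root_mod_sq (q : ℕ) (hq : q.Prime) (hodd : Odd q)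
    (h5 : (q : ℤ) ≡ 1 [ZMOD 5] ∨ (q : ℤ) ≡ -1 [ZMOD 5]) :
    ∃ j : ℤ, ((q : ℤ) ^ 2) ∣ j ^ 2 + j - 1 := by
  haveI : Fact q.Prime := ⟨hq⟩
  have hq2 : q ≠ 2 := by rintro rfl; exact (by decide : ¬ Odd 2) hodd
  have hq5 : q ≠ 5 := by
    rintro rfl
    rcases h5 with h | h
    · exact absurd (show (5:ℤ) % 5 = 1 % 5 from h) (by decide)
    · exact absurd (show (5:ℤ) % 5 = -1 % 5 from h) (by decide)
  have h2ne : (2 : ZMod q) ≠ 0 := by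
    have : ((2 : ℕ) : ZMod q) ≠ 0 := by
      rw [Ne, ZMod.natCast_eq_zero_iff]
      intro h
      exact hq2 ((Nat.prime_dvd_prime_iff_eq hq (by norm_num)).mp h)
    exact_mod_cast this
  have h5ne : ((5 : ℤ) : ZMod q) ≠ 0 := by
    rw [Ne, ZMod.intCast_zmod_eq_zero_iff_dvd]
    intro h
    have hn : q ∣ 5 := by exact_mod_cast h
    exact hq5 ((Nat.prime_dvd_prime_iff_eq hq (by norm_num)).mp hn)
  -- legendre symbol computation
  have hls : legendreSym q 5 = 1 := by
    have hrec := legendreSym.quadratic_reciprocity_one_mod_four (p := 5) (q := q)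
      (by norm_num) hq2
    norm_num at hrec
    rw [hrec]
    have hm := legendreSym.mod 5 (q : ℤ)
    norm_num at hm
    rcases h5 with h | h
    · have h' : (q:ℤ) % 5 = 1 % 5 := h
      norm_num at h'
      rw [hm, h']; decide
    · have h' : (q:ℤ) % 5 = -1 % 5 := h
      norm_num at h'
      rw [hm, h']; decide
  have hsq : IsSquare ((5 : ℤ) : ZMod q) := (legendreSym.eq_one_iff q h5ne).mp hls
  obtain ⟨r, hr⟩ := hsq
  -- r ≠ 0
  have hr0 : r ≠ 0 := by
    rintro rfl
    exact h5ne (by rw [hr]; ring)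
  have h2r : (2 : ZMod q) * r ≠ 0 := mul_ne_zero h2ne hr0
  -- lift r to ℤ
  set s₀ : ℤ := (r.val : ℤ) with hs₀
  have hrs : ((s₀ : ℤ) : ZMod q) = r := by
    rw [hs₀]; push_cast; rw [ZMod.natCast_val, ZMod.cast_id]
  have hdvd : (q : ℤ) ∣ s₀ ^ 2 - 5 := by
    rw [← ZMod.intCast_zmod_eq_zero_iff_dvd]
    push_cast
    rw [hrs]
    have h5' : (5 : ZMod q) = r * r := by exact_mod_cast hr
    rw [h5']
    ring
  obtain ⟨c, hc⟩ := hdvd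
  -- inverse u of 2*s₀ mod q
  set u : ℤ := (((2 : ZMod q) * r)⁻¹.val : ℤ) with hu
  have huz : ((u : ℤ) : ZMod q) = ((2 : ZMod q) * r)⁻¹ := by
    rw [hu]; push_cast; rw [ZMod.natCast_val, ZMod.cast_id]
  have hinv : (q : ℤ) ∣ 2 * s₀ * u - 1 := by
    rw [← ZMod.intCast_zmod_eq_zero_iff_dvd]
    push_cast
    rw [hrs, huz, mul_inv_cancel₀ h2r]
    ring
  obtain ⟨v, hv⟩ := hinv
  -- Hensel: s := s₀ + q * t with t := -c * u
  set t : ℤ := -c * u with ht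
  set s : ℤ := s₀ + q * t with hs
  have hsq2 : ((q : ℤ) ^ 2) ∣ s ^ 2 - 5 := by
    have he : s ^ 2 - 5 = (q : ℤ) * (c + 2 * s₀ * t) + (q:ℤ)^2 * t^2 := by
      rw [hs]; ring_nf; linear_combination hc
    rw [he]
    have hct : (q : ℤ) ∣ c + 2 * s₀ * t := by
      have he2 : c + 2 * s₀ * t = -c * (2 * s₀ * u - 1) := by rw [ht]; ring
      rw [he2, hv]
      exact ⟨-c * v, by ring⟩
    obtain ⟨w, hw⟩ := hct
    exact ⟨w + t ^ 2, by rw [hw]; ring⟩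
  -- make s odd
  have hq2odd : Odd ((q : ℤ) ^ 2) := by
    obtain ⟨c, hc⟩ := hodd
    exact ⟨2 * c ^ 2 + 2 * c, by push_cast [hc]; ring⟩
  obtain ⟨j, hj⟩ : ∃ j : ℤ, ((q:ℤ)^2) ∣ (2 * j + 1) ^ 2 - 5 := by
    rcases Int.even_or_odd s with he | ho
    · obtain ⟨j, hjj⟩ : Odd (s + (q:ℤ)^2) := Even.add_odd he hq2odd
      refine ⟨j, ?_⟩
      have he3 : (2 * j + 1) ^ 2 - 5 = (s ^ 2 - 5) + (q:ℤ)^2 * (2 * s + (q:ℤ)^2) := by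
        rw [show (2 * j + 1 : ℤ) = s + (q:ℤ)^2 from hjj.symm]; ring
      rw [he3]
      exact dvd_add hsq2 ⟨2 * s + (q:ℤ)^2, rfl⟩
    · obtain ⟨j, hjj⟩ := ho
      exact ⟨j, by rwa [show (2 * j + 1 : ℤ) = s by rw [hjj]]⟩
  refine ⟨j, ?_⟩
  -- 4 * (j² + j - 1) = (2j+1)² - 5
  have h4 : ((q:ℤ)^2) ∣ 4 * (j ^ 2 + j - 1) := by
    have he4 : 4 * (j ^ 2 + j - 1) = (2 * j + 1) ^ 2 - 5 := by ring
    rw [he4]; exact hj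
  have hcop : IsCoprime ((q:ℤ)^2) 4 := by
    have hqp : Prime (q : ℤ) := Nat.prime_iff_prime_int.mp hq
    have h2 : ¬ (q:ℤ) ∣ 2 := by
      intro h
      have hn : q ∣ 2 := by exact_mod_cast h
      exact hq2 ((Nat.prime_dvd_prime_iff_eq hq (by norm_num)).mp hn)
    have hc1 : IsCoprime ((q:ℤ)) 2 := (Prime.coprime_iff_not_dvd hqp).mpr h2
    have h24 : (4:ℤ) = 2 ^ 2 := by norm_num
    rw [h24]
    exact hc1.pow
  exact hcop.dvd_of_dvd_mul_left h4

/-- **(18).** If `q` is an odd prime with `q ≡ ±1 (mod 5)` and `q ∤ k² + k - 1`, then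
`V_{(q-1)/2}(1 + 2k, k² + k - 1)² ≡ (k² + k - 1)^{q-1} + 2(k² + k - 1)^{(q-1)/2} + 1
(mod q²)`. -/
theorem lucasV_fib_half_sq_congr (q : ℕ) (hq : q.Prime) (hodd : Odd q)
    (h5 : (q : ℤ) ≡ 1 [ZMOD 5] ∨ (q : ℤ) ≡ -1 [ZMOD 5]) (k : ℤ)
    (hk : ¬ (q : ℤ) ∣ (k ^ 2 + k - 1)) :
    lucasV (1 + 2 * k) (k ^ 2 + k - 1) ((q - 1) / 2) ^ 2 ≡
      (k ^ 2 + k - 1) ^ (q - 1) + 2 * (k ^ 2 + k - 1) ^ ((q - 1) / 2) + 1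
      [ZMOD (q : ℤ) ^ 2] := by
  obtain ⟨j, hj⟩ := exists_root_mod_sq q hq hodd h5
  set m : ℕ := (q - 1) / 2 with hmdef
  set a : ℤ := k + j + 1 with ha
  set b : ℤ := k - j with hb
  have hs : a + b = 1 + 2 * k := by rw [ha, hb]; ring
  have hQ : a * b ≡ k ^ 2 + k - 1 [ZMOD (q:ℤ)^2] := by
    rw [Int.modEq_iff_dvd]
    have he : (k ^ 2 + k - 1) - a * b = j ^ 2 + j - 1 := by rw [ha, hb]; ring
    rw [he]; exact hj
  have hV := lucasV_modEq hs hQ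
  have hqdvd : (q : ℤ) ∣ (q:ℤ)^2 := dvd_pow_self _ two_ne_zero
  have hQq : a * b ≡ k ^ 2 + k - 1 [ZMOD (q:ℤ)] := hQ.of_dvd hqdvd
  have hqp : Prime (q : ℤ) := Nat.prime_iff_prime_int.mp hq
  have hnab : ¬ (q:ℤ) ∣ a * b := by
    intro h
    apply hk
    have hd : (q:ℤ) ∣ (k ^ 2 + k - 1) - a * b := hQq.dvd
    have := hd.add h
    rwa [sub_add_cancel] at this
  have hna : ¬ (q:ℤ) ∣ a := fun h => hnab (h.mul_right b)
  have hnb : ¬ (q:ℤ) ∣ b := fun h => hnab (h.mul_left a)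
  have hfa : a ^ (q - 1) ≡ 1 [ZMOD (q:ℤ)] :=
    Int.ModEq.pow_card_sub_one_eq_one hq ((Prime.coprime_iff_not_dvd hqp).mpr hna).symm
  have hfb : b ^ (q - 1) ≡ 1 [ZMOD (q:ℤ)] :=
    Int.ModEq.pow_card_sub_one_eq_one hq ((Prime.coprime_iff_not_dvd hqp).mpr hnb).symm
  obtain ⟨x, hx⟩ : (q:ℤ) ∣ 1 - a ^ (q - 1) := hfa.dvd
  obtain ⟨y, hy⟩ : (q:ℤ) ∣ 1 - b ^ (q - 1) := hfb.dvd
  have hm : m * 2 = q - 1 := by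
    obtain ⟨c, hc⟩ := hodd
    rw [hmdef]
    omega
  rw [← hm, pow_mul] at hx hy
  have h1 : lucasV (1 + 2 * k) (k ^ 2 + k - 1) m ^ 2 ≡
      (a ^ m + b ^ m) ^ 2 [ZMOD (q:ℤ)^2] := (hV m).pow 2
  have key : (a ^ m + b ^ m) ^ 2 ≡
      (a * b) ^ (q - 1) + 2 * (a * b) ^ m + 1 [ZMOD (q:ℤ)^2] := by
    rw [Int.modEq_iff_dvd, ← hm, pow_mul, mul_pow]
    refine ⟨x * y, ?_⟩
    linear_combination (1 - (b ^ m) ^ 2) * hx + ((q:ℤ) * x) * hy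
  have h2 : (a * b) ^ (q - 1) + 2 * (a * b) ^ m + 1 ≡
      (k ^ 2 + k - 1) ^ (q - 1) + 2 * (k ^ 2 + k - 1) ^ m + 1
      [ZMOD (q:ℤ)^2] := ((hQ.pow _).add ((hQ.pow _).mul_left 2)).add_right 1
  exact h1.trans (key.trans h2)
end

section
/- Let q be an odd prime with q ≡ 1 (mod 8) or q ≡ −1 (mod 8), and let k be an integer such that k² + 2k − 1 is not divisible by q. Then V_{(q−1)/2}(2 + 2k, k² + 2k − 1)² ≡ (k² + 2k − 1)^{q−1} + 2(k² + 2k − 1)^{(q−1)/2} + 1 (mod q²). -/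
/-- If `A + B = P` and `A * B ≡ Q [ZMOD n]`, then `V_m(P,Q) ≡ A^m + B^m [ZMOD n]`. -/
lemma lucasV_modEq_s16 (P Q A B n : ℤ) (hS : A + B = P) (hP : A * B ≡ Q [ZMOD n]) :
    ∀ m, lucasV P Q m ≡ A ^ m + B ^ m [ZMOD n] ∧
      lucasV P Q (m + 1) ≡ A ^ (m + 1) + B ^ (m + 1) [ZMOD n] := by
  intro m
  induction m with
  | zero =>
    refine ⟨?_, ?_⟩
    · show (lucasV P Q 0 : ℤ) ≡ _ [ZMOD n]
      simp [lucasV]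
    · show (lucasV P Q 1 : ℤ) ≡ _ [ZMOD n]
      have h : A ^ 1 + B ^ 1 = P := by rw [← hS]; ring
      rw [show lucasV P Q 1 = P from rfl, h]
  | succ m ih =>
    refine ⟨ih.2, ?_⟩
    show P * lucasV P Q (m + 1) - Q * lucasV P Q m ≡ _ [ZMOD n]
    have h1 : P * lucasV P Q (m + 1) - Q * lucasV P Q m ≡
        P * (A ^ (m + 1) + B ^ (m + 1)) - A * B * (A ^ m + B ^ m) [ZMOD n] :=
      ((Int.ModEq.refl P).mul ih.2).sub (hP.symm.mul ih.1)
    have h2 : P * (A ^ (m + 1) + B ^ (m + 1)) - A * B * (A ^ m + B ^ m) =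
        A ^ (m + 2) + B ^ (m + 2) := by rw [← hS]; ring
    rw [h2] at h1
    exact h1

/-- Hensel lifting of a square root of 2 from mod q to mod q². -/
lemma exists_sqrt_two_sq (q : ℕ) (hq : q.Prime) (hodd : Odd q)
    (hsq : IsSquare (2 : ZMod q)) : ∃ s : ℤ, s ^ 2 ≡ 2 [ZMOD (q : ℤ) ^ 2] := by
  haveI : Fact q.Prime := ⟨hq⟩
  obtain ⟨x, hx⟩ := hsq
  set t : ℤ := (x.val : ℤ) with ht
  have hxt : ((t : ℤ) : ZMod q) = x := by simp [ht]
  have hdvd : (q : ℤ) ∣ t ^ 2 - 2 := by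
    have h0 : ((t ^ 2 - 2 : ℤ) : ZMod q) = 0 := by
      push_cast
      rw [hxt, sq, ← hx]
      ring
    exact (ZMod.intCast_zmod_eq_zero_iff_dvd _ q).mp h0
  obtain ⟨e, he⟩ := hdvd
  have hqne2 : q ≠ 2 := by obtain ⟨c, hc⟩ := hodd; omega
  have h2ne : (2 : ZMod q) ≠ 0 := by
    intro hcontra
    have h2 : ((2 : ℕ) : ZMod q) = 0 := by exact_mod_cast hcontra
    have := (ZMod.natCast_eq_zero_iff 2 q).mp h2
    exact hqne2 ((Nat.prime_dvd_prime_iff_eq hq Nat.prime_two).mp this)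
  have hq2 : ((2 * t : ℤ) : ZMod q) ≠ 0 := by
    intro h
    have hx0 : x ≠ 0 := by
      intro h0
      rw [h0, mul_zero] at hx
      exact h2ne hx
    have h' : (2 : ZMod q) * x = 0 := by
      push_cast at h
      rw [hxt] at h
      exact h
    rcases mul_eq_zero.mp h' with h' | h'
    · exact h2ne h'
    · exact hx0 h'
  set u : ℤ := ((((2 * t : ℤ) : ZMod q))⁻¹.val : ℤ) with hu
  have hinv : (q : ℤ) ∣ 2 * t * u - 1 := by
    rw [← ZMod.intCast_zmod_eq_zero_iff_dvd]
    push_cast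
    rw [hu]
    push_cast
    rw [ZMod.natCast_val, ZMod.cast_id]
    have hq2' : (2 : ZMod q) * (t : ZMod q) ≠ 0 := by push_cast at hq2; exact hq2
    rw [mul_inv_cancel₀ hq2']
    simp
  obtain ⟨c, hc⟩ := hinv
  refine ⟨t + q * (u * (-e)), Int.ModEq.symm (Int.modEq_iff_dvd.mpr ?_)⟩
  refine ⟨u ^ 2 * e ^ 2 - e * c, ?_⟩
  linear_combination he - (q : ℤ) * e * hc

/-- **(22).** If `q` is an odd prime with `q ≡ ±1 (mod 8)` and `q ∤ k² + 2k - 1`, then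
`V_{(q-1)/2}(2 + 2k, k² + 2k - 1)² ≡ (k² + 2k - 1)^{q-1} + 2(k² + 2k - 1)^{(q-1)/2} + 1
(mod q²)`. -/
theorem lucasV_pell_half_sq_congr (q : ℕ) (hq : q.Prime) (hodd : Odd q)
    (h8 : (q : ℤ) ≡ 1 [ZMOD 8] ∨ (q : ℤ) ≡ -1 [ZMOD 8]) (k : ℤ)
    (hk : ¬ (q : ℤ) ∣ (k ^ 2 + 2 * k - 1)) :
    lucasV (2 + 2 * k) (k ^ 2 + 2 * k - 1) ((q - 1) / 2) ^ 2 ≡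
      (k ^ 2 + 2 * k - 1) ^ (q - 1) + 2 * (k ^ 2 + 2 * k - 1) ^ ((q - 1) / 2) + 1
      [ZMOD (q : ℤ) ^ 2] := by
  haveI : Fact q.Prime := ⟨hq⟩
  have hqne2 : q ≠ 2 := by obtain ⟨c, hc⟩ := hodd; omega
  have hmod8 : q % 8 = 1 ∨ q % 8 = 7 := by
    rcases h8 with h | h
    · left
      have h' : (8 : ℤ) ∣ (q : ℤ) - 1 := Int.ModEq.dvd h.symm
      omega
    · right
      have h2 := Int.ModEq.dvd h
      omega
  have hsq2 : IsSquare (2 : ZMod q) := (ZMod.exists_sq_eq_two_iff hqne2).mpr hmod8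
  obtain ⟨s, hs⟩ := exists_sqrt_two_sq q hq hodd hsq2
  set Q : ℤ := k ^ 2 + 2 * k - 1 with hQ
  set A : ℤ := k + 1 + s with hA
  set B : ℤ := k + 1 - s with hB
  have hS : A + B = 2 + 2 * k := by rw [hA, hB]; ring
  have hABQ : A * B ≡ Q [ZMOD (q : ℤ) ^ 2] := by
    have h0 : A * B = (k ^ 2 + 2 * k + 1) - s ^ 2 := by rw [hA, hB]; ring
    rw [h0, hQ]
    calc (k ^ 2 + 2 * k + 1) - s ^ 2
        ≡ (k ^ 2 + 2 * k + 1) - 2 [ZMOD (q : ℤ) ^ 2] := (Int.ModEq.refl _).sub hs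
      _ = k ^ 2 + 2 * k - 1 := by ring
  clear_value A B
  set m : ℕ := (q - 1) / 2 with hm
  have h2m : 2 * m = q - 1 := by
    obtain ⟨c, hc⟩ := hodd
    omega
  have hV := (lucasV_modEq_s16 (2 + 2 * k) Q A B ((q : ℤ) ^ 2) hS hABQ m).1
  have hqprime : Prime (q : ℤ) := Nat.prime_iff_prime_int.mp hq
  have hABq : A * B ≡ Q [ZMOD (q : ℤ)] :=
    hABQ.of_dvd (dvd_pow_self _ (by norm_num))
  have hndvd : ∀ C D : ℤ, C * D = A * B → ¬ (q : ℤ) ∣ C := by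
    intro C D hCD hdC
    apply hk
    have h1 : (q : ℤ) ∣ A * B := hCD ▸ hdC.mul_right D
    have h2 : (q : ℤ) ∣ Q - A * B := hABq.dvd
    have := dvd_add h2 h1
    simpa using this
  have hndvdA : ¬ (q : ℤ) ∣ A := hndvd A B rfl
  have hndvdB : ¬ (q : ℤ) ∣ B := hndvd B A (by ring)
  have hcopA : IsCoprime A (q : ℤ) := (hqprime.coprime_iff_not_dvd.mpr hndvdA).symm
  have hcopB : IsCoprime B (q : ℤ) := (hqprime.coprime_iff_not_dvd.mpr hndvdB).symm
  have hFA : A ^ (q - 1) ≡ 1 [ZMOD (q : ℤ)] := Int.ModEq.pow_card_sub_one_eq_one hq hcopA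
  have hFB : B ^ (q - 1) ≡ 1 [ZMOD (q : ℤ)] := Int.ModEq.pow_card_sub_one_eq_one hq hcopB
  obtain ⟨a, ha⟩ : (q : ℤ) ∣ A ^ (q - 1) - 1 := hFA.symm.dvd
  obtain ⟨b, hb⟩ : (q : ℤ) ∣ B ^ (q - 1) - 1 := hFB.symm.dvd
  have key : (q : ℤ) ^ 2 ∣ (A ^ (q - 1) - 1) * (B ^ (q - 1) - 1) :=
    ⟨a * b, by rw [ha, hb]; ring⟩
  obtain ⟨w, hw⟩ := key
  have h3 : A ^ (q - 1) + B ^ (q - 1) ≡ (A * B) ^ (q - 1) + 1 [ZMOD (q : ℤ) ^ 2] := by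
    refine Int.modEq_iff_dvd.mpr ⟨w, ?_⟩
    rw [mul_pow]
    linear_combination hw
  have h1 := hV.pow 2
  have h2 : (A ^ m + B ^ m) ^ 2 = A ^ (2 * m) + B ^ (2 * m) + 2 * (A * B) ^ m := by
    rw [pow_mul', pow_mul', mul_pow]; ring
  rw [h2m] at h2
  calc lucasV (2 + 2 * k) Q m ^ 2
      ≡ (A ^ m + B ^ m) ^ 2 [ZMOD (q : ℤ) ^ 2] := h1
    _ = A ^ (q - 1) + B ^ (q - 1) + 2 * (A * B) ^ m := h2
    _ ≡ ((A * B) ^ (q - 1) + 1) + 2 * (A * B) ^ m [ZMOD (q : ℤ) ^ 2] :=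
        h3.add (Int.ModEq.refl _)
    _ ≡ (Q ^ (q - 1) + 1) + 2 * Q ^ m [ZMOD (q : ℤ) ^ 2] :=
        ((hABQ.pow (q - 1)).add (Int.ModEq.refl 1)).add ((Int.ModEq.refl 2).mul (hABQ.pow m))
    _ = Q ^ (q - 1) + 2 * Q ^ m + 1 := by ring
end
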